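/- arXiv:2202.01103 — 5 statements merged into one kernel-verified Lean document; each statement's English description precedes it below -/
import Mathlib

section
/- A temporal graph G is a (Δ₁,Δ₂)-cluster temporal graph if and only if every Δ₂-saturated set of its time-edges forms a Δ₁-temporal clique. -/
/-- A time-edge: an (undirected) edge together with a time label. -/
abbrev TimeEdge := Sym2 ℕ × ℕ

/-- Vertices appearing in a set of time-edges. -/
def verts (S : Set TimeEdge) : Set ℕ := {v | ∃ te ∈ S, v ∈ te.1}

/-- Times appearing in a set of time-edges. -/
def times (S : Set TimeEdge) : Set ℕ := Prod.snd '' S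

/-- The lifetime interval of a set of time-edges. -/
def lifetime (S : Set TimeEdge) : Set ℕ := Set.Icc (sInf (times S)) (sSup (times S))

/-- Two sets of time-edges are Δ₂-independent if their vertex sets are disjoint or
their lifetime intervals are at temporal distance at least Δ₂. -/
def Indep (Δ₂ : ℕ) (S₁ S₂ : Set TimeEdge) : Prop :=
  Disjoint (verts S₁) (verts S₂) ∨
    ∀ s ∈ lifetime S₁, ∀ t ∈ lifetime S₂, Δ₂ ≤ max s t - min s t

/-- A set of time-edges is Δ₂-indivisible if it cannot be partitioned into two or more
nonempty pairwise Δ₂-independent subsets. -/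
def Indivisible (Δ₂ : ℕ) (S : Set TimeEdge) : Prop :=
  ¬ ∃ P : Set (Set TimeEdge), P.Nontrivial ∧ (∀ A ∈ P, A.Nonempty) ∧
      ⋃₀ P = S ∧ P.PairwiseDisjoint id ∧ P.Pairwise (Indep Δ₂)

/-- The edge `e` is Δ₁-dense in `[a,b]` with respect to the time-edge set `S`. -/
def DenseIn (S : Set TimeEdge) (Δ₁ : ℕ) (e : Sym2 ℕ) (a b : ℕ) : Prop :=
  ∀ τ ∈ Set.Icc a (max a (b + 1 - Δ₁)), ∃ t, t ∈ Set.Icc τ (τ + Δ₁ - 1) ∧ (e, t) ∈ S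

/-- A set of time-edges forms a Δ₁-temporal clique if every pair of its vertices is
joined by an edge Δ₁-dense in its lifetime. -/
def IsTemporalClique (Δ₁ : ℕ) (K : Set TimeEdge) : Prop :=
  ∀ x ∈ verts K, ∀ y ∈ verts K, x ≠ y →
    DenseIn K Δ₁ s(x, y) (sInf (times K)) (sSup (times K))

/-- A (Δ₁,Δ₂)-cluster temporal graph: the time-edges partition into pairwise
Δ₂-independent Δ₁-temporal cliques. -/
def IsClusterTemporalGraph (Δ₁ Δ₂ : ℕ) (E : Set TimeEdge) : Prop :=
  ∃ P : Set (Set TimeEdge), ⋃₀ P = E ∧ P.PairwiseDisjoint id ∧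
    (∀ K ∈ P, IsTemporalClique Δ₁ K) ∧ P.Pairwise (Indep Δ₂)

/-- A Δ₂-saturated set of time-edges in `E`: a Δ₂-indivisible subset of `E` such that
adding any other time-edge of `E` destroys indivisibility. -/
def Saturated (Δ₂ : ℕ) (E S : Set TimeEdge) : Prop :=
  S ⊆ E ∧ Indivisible Δ₂ S ∧ ∀ te ∈ E, te ∉ S → ¬ Indivisible Δ₂ (insert te S)

/-- The induced temporal subgraph on a vertex set `A`. -/
def induced (E : Set TimeEdge) (A : Set ℕ) : Set TimeEdge :=
  {te ∈ E | ∀ v ∈ te.1, v ∈ A}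

/-- Two single time-edges are Δ-independent. -/
def TEIndep (Δ : ℕ) (te₁ te₂ : TimeEdge) : Prop :=
  (∀ v ∈ te₁.1, v ∉ te₂.1) ∨ Δ ≤ max te₁.2 te₂.2 - min te₁.2 te₂.2


/-!
An indivisible set that meets several blocks of a partition into pairwise independent parts
would be split by them, so it lies inside a single block; and the union of two indivisible sets
that are not independent is again indivisible. Consequently the maximal indivisible subsets of `E`
are pairwise independent and cover `E`; they are saturated, so if saturated sets are temporal
cliques, they witness that `E` is a cluster temporal graph. Conversely, a saturated set `S` lies
inside one clique `K` of a cluster partition, and every appearance in `K` of an edge between two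
vertices of `S` at a time within `Δ₁ < Δ₂` of the lifetime of `S` is not independent of `S`,
hence belongs to `S` by saturation; these appearances make each such edge dense in the lifetime of `S`.
-/

section

variable {Δ₂ : ℕ} {E S T X Y : Set TimeEdge}

lemma verts_mono (h : S ⊆ T) : verts S ⊆ verts T :=
  fun _ ⟨te, hte, hv⟩ => ⟨te, h hte, hv⟩

lemma mem_lifetime (hS : S.Finite) {te : TimeEdge} (hte : te ∈ S) : te.2 ∈ lifetime S :=
  ⟨Nat.sInf_le ⟨te, hte, rfl⟩, le_csSup (hS.image _).bddAbove ⟨te, hte, rfl⟩⟩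

lemma sInf_times_le_sSup_times (hS : S.Finite) (hne : S.Nonempty) :
    sInf (times S) ≤ sSup (times S) :=
  let ⟨_, hte⟩ := hne
  (mem_lifetime hS hte).1.trans (mem_lifetime hS hte).2

lemma sInf_times_le_of_subset (hS : S.Nonempty) (h : S ⊆ T) :
    sInf (times T) ≤ sInf (times S) :=
  csInf_le_csInf (OrderBot.bddBelow _) (hS.image _) (Set.image_mono h)

lemma sSup_times_le_of_subset (hT : T.Finite) (hS : S.Nonempty) (h : S ⊆ T) :
    sSup (times S) ≤ sSup (times T) :=
  csSup_le_csSup (hT.image _).bddAbove (hS.image _) (Set.image_mono h)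

lemma lifetime_mono (hT : T.Finite) (hS : S.Nonempty) (h : S ⊆ T) :
    lifetime S ⊆ lifetime T :=
  Set.Icc_subset_Icc (sInf_times_le_of_subset hS h) (sSup_times_le_of_subset hT hS h)

lemma Indep.mono {X' Y' : Set TimeEdge} (h : Indep Δ₂ X Y) (hX : X.Finite) (hY : Y.Finite)
    (hX' : X'.Nonempty) (hY' : Y'.Nonempty) (hXX' : X' ⊆ X) (hYY' : Y' ⊆ Y) :
    Indep Δ₂ X' Y' := by
  rcases h with h | h
  · exact Or.inl (h.mono (verts_mono hXX') (verts_mono hYY'))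
  · exact Or.inr fun s hs t ht =>
      h s (lifetime_mono hX hX' hXX' hs) t (lifetime_mono hY hY' hYY' ht)

lemma not_indep_of_mem (hΔ : 0 < Δ₂) (hS : S.Finite) (hT : T.Finite) {te : TimeEdge}
    (hteS : te ∈ S) (hteT : te ∈ T) : ¬ Indep Δ₂ S T := by
  rintro (h | h)
  · exact Set.disjoint_left.1 h ⟨te, hteS, Sym2.out_fst_mem te.1⟩ ⟨te, hteT, Sym2.out_fst_mem te.1⟩
  · have := h te.2 (mem_lifetime hS hteS) te.2 (mem_lifetime hT hteT)
    omega

lemma indivisible_singleton (te : TimeEdge) : Indivisible Δ₂ {te} := by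
  rintro ⟨P, ⟨A, hA, B, hB, hAB⟩, hne, hcover, -, -⟩
  have key : ∀ C ∈ P, C = {te} := fun C hC =>
    (hne C hC).subset_singleton_iff.1 (hcover ▸ Set.subset_sUnion_of_mem hC)
  exact hAB ((key A hA).trans (key B hB).symm)

lemma Indivisible.exists_subset_of_subset_sUnion {P : Set (Set TimeEdge)}
    (hX : Indivisible Δ₂ X) (hXne : X.Nonempty) (hP : (⋃₀ P).Finite)
    (hdisj : P.PairwiseDisjoint id) (hind : P.Pairwise (Indep Δ₂)) (hXP : X ⊆ ⋃₀ P) :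
    ∃ A ∈ P, X ⊆ A := by
  set Q := (X ∩ ·) '' {A ∈ P | (X ∩ A).Nonempty}
  have hcover : ⋃₀ Q = X := by
    refine Set.Subset.antisymm (Set.sUnion_subset ?_) fun x hx => ?_
    · rintro _ ⟨A, -, rfl⟩
      exact Set.inter_subset_left
    · obtain ⟨A, hA, hxA⟩ := hXP hx
      exact ⟨X ∩ A, ⟨A, ⟨hA, x, hx, hxA⟩, rfl⟩, hx, hxA⟩
  have hQ : Q.Subsingleton := by
    rw [← Set.not_nontrivial_iff]
    refine fun hQ => hX ⟨Q, hQ, ?_, hcover, ?_, ?_⟩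
    · rintro _ ⟨A, ⟨-, hA⟩, rfl⟩
      exact hA
    · rintro _ ⟨A, ⟨hA, -⟩, rfl⟩ _ ⟨B, ⟨hB, -⟩, rfl⟩ hAB
      exact (hdisj hA hB fun h => hAB (h ▸ rfl)).mono Set.inter_subset_right
        Set.inter_subset_right
    · rintro _ ⟨A, ⟨hA, hA'⟩, rfl⟩ _ ⟨B, ⟨hB, hB'⟩, rfl⟩ hAB
      exact (hind hA hB fun h => hAB (h ▸ rfl)).mono
        (hP.subset (Set.subset_sUnion_of_mem hA)) (hP.subset (Set.subset_sUnion_of_mem hB))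
        hA' hB' Set.inter_subset_right Set.inter_subset_right
  obtain ⟨x, hx⟩ := hXne
  obtain ⟨A, hA, hxA⟩ := hXP hx
  refine ⟨A, hA, fun y hy => ?_⟩
  obtain ⟨B, hB, hyB⟩ := hXP hy
  have hBA : X ∩ B = X ∩ A := hQ ⟨B, ⟨hB, y, hy, hyB⟩, rfl⟩ ⟨A, ⟨hA, x, hx, hxA⟩, rfl⟩
  exact (hBA ▸ ⟨hy, hyB⟩ : y ∈ X ∩ A).2

lemma Indivisible.union (hX : Indivisible Δ₂ X) (hY : Indivisible Δ₂ Y) (hXY : ¬ Indep Δ₂ X Y)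
    (hfin : (X ∪ Y).Finite) : Indivisible Δ₂ (X ∪ Y) := by
  have hXne : X.Nonempty :=
    Set.nonempty_iff_ne_empty.2 fun h => hXY (Or.inl (by simp [h, verts]))
  have hYne : Y.Nonempty :=
    Set.nonempty_iff_ne_empty.2 fun h => hXY (Or.inl (by simp [h, verts]))
  rintro ⟨P, hnt, hne, hcover, hdisj, hind⟩
  rw [← hcover] at hfin
  obtain ⟨A, hA, hXA⟩ := hX.exists_subset_of_subset_sUnion hXne hfin hdisj hind
    (hcover ▸ Set.subset_union_left)
  obtain ⟨B, hB, hYB⟩ := hY.exists_subset_of_subset_sUnion hYne hfin hdisj hind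
    (hcover ▸ Set.subset_union_right)
  have hAB : A = B := by
    by_contra hAB
    exact hXY ((hind hA hB hAB).mono (hfin.subset (Set.subset_sUnion_of_mem hA))
      (hfin.subset (Set.subset_sUnion_of_mem hB)) hXne hYne hXA hYB)
  obtain ⟨C, hC, hCA⟩ := hnt.exists_ne A
  obtain ⟨c, hc⟩ := hne C hC
  have hcA : c ∈ A := Set.union_subset hXA (hAB ▸ hYB) (hcover ▸ ⟨C, hC, hc⟩)
  exact Set.disjoint_left.1 (hdisj hC hA hCA) hc hcA

lemma Saturated.mem_of_near (hΔ : 0 < Δ₂) (hS : Saturated Δ₂ E S) (hE : E.Finite)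
    {te : TimeEdge} {v : ℕ} (hte : te ∈ E) (hv : v ∈ te.1) (hvS : v ∈ verts S)
    (hlo : sInf (times S) < te.2 + Δ₂) (hhi : te.2 < sSup (times S) + Δ₂) : te ∈ S := by
  obtain ⟨hSE, hSind, hSmax⟩ := hS
  by_contra hteS
  refine hSmax te hte hteS ?_
  rw [Set.insert_eq]
  refine (indivisible_singleton te).union hSind ?_ (hE.subset (Set.insert_subset hte hSE))
  rintro (hdisj | hfar)
  · exact Set.disjoint_left.1 hdisj ⟨te, rfl, hv⟩ hvS
  · obtain ⟨_, hte', -⟩ := hvS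
    have hlife := sInf_times_le_sSup_times (hE.subset hSE) ⟨_, hte'⟩
    have := hfar te.2 (mem_lifetime (Set.finite_singleton te) rfl)
      (min (sSup (times S)) (max (sInf (times S)) te.2)) ⟨by omega, by omega⟩
    omega

lemma DenseIn.of_near {K : Set TimeEdge} {Δ₁ a b a' b' : ℕ} {e : Sym2 ℕ}
    (hK : DenseIn K Δ₁ e a b) (ha : a ≤ a') (hab : a' ≤ b') (hb : b' ≤ b)
    (hnear : ∀ t, (e, t) ∈ K → a' ≤ t + Δ₁ → t ≤ b' + Δ₁ → (e, t) ∈ S)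
    (hS : ∀ t, (e, t) ∈ S → t ∈ Set.Icc a' b') : DenseIn S Δ₁ e a' b' := by
  rintro τ ⟨hτa, hτb⟩
  obtain ⟨t, ⟨htτ, htτ'⟩, htK⟩ := hK (min τ (max a (b + 1 - Δ₁))) ⟨by omega, by omega⟩
  have htS := hnear t htK (by omega) (by omega)
  obtain ⟨hta, htb⟩ := hS t htS
  exact ⟨t, ⟨by omega, by omega⟩, htS⟩

lemma Saturated.of_maximal (hS : Maximal (fun U => U ⊆ E ∧ Indivisible Δ₂ U) S) :
    Saturated Δ₂ E S :=
  ⟨hS.prop.1, hS.prop.2, fun te hte hteS hind => hteS <|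
    hS.le_of_ge ⟨Set.insert_subset hte hS.prop.1, hind⟩ (Set.subset_insert te S)
      (Set.mem_insert te S)⟩

lemma indep_of_maximal (hE : E.Finite) (hS : Maximal (fun U => U ⊆ E ∧ Indivisible Δ₂ U) S)
    (hT : Maximal (fun U => U ⊆ E ∧ Indivisible Δ₂ U) T) (hST : S ≠ T) : Indep Δ₂ S T := by
  by_contra h
  have hU : S ∪ T ⊆ E ∧ Indivisible Δ₂ (S ∪ T) :=
    ⟨Set.union_subset hS.prop.1 hT.prop.1,
      hS.prop.2.union hT.prop.2 h (hE.subset (Set.union_subset hS.prop.1 hT.prop.1))⟩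
  exact hST ((hS.eq_of_ge hU Set.subset_union_left).symm.trans
    (hT.eq_of_ge hU Set.subset_union_right))

lemma exists_maximal_indivisible_mem (hE : E.Finite) {te : TimeEdge} (hte : te ∈ E) :
    ∃ S, Maximal (fun U => U ⊆ E ∧ Indivisible Δ₂ U) S ∧ te ∈ S := by
  have hfin : {U | U ⊆ E ∧ Indivisible Δ₂ U}.Finite :=
    hE.finite_subsets.subset fun _ hU => hU.1
  obtain ⟨S, hteS, hS⟩ :=
    hfin.exists_le_maximal ⟨Set.singleton_subset_iff.2 hte, indivisible_singleton te⟩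
  exact ⟨S, hS, hteS rfl⟩

theorem IsClusterTemporalGraph.isTemporalClique_of_saturated {Δ₁ : ℕ} (hΔ : Δ₁ < Δ₂)
    (hE : E.Finite) (hG : IsClusterTemporalGraph Δ₁ Δ₂ E) (hS : Saturated Δ₂ E S) :
    IsTemporalClique Δ₁ S := by
  obtain ⟨P, hcover, hdisj, hclique, hind⟩ := hG
  rintro x hx y hy hxy
  have hSfin : S.Finite := hE.subset hS.1
  have hSne : S.Nonempty := let ⟨te, hte, _⟩ := hx; ⟨te, hte⟩
  obtain ⟨K, hK, hSK⟩ :=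
    hS.2.1.exists_subset_of_subset_sUnion hSne (hcover ▸ hE) hdisj hind (hcover ▸ hS.1)
  have hKE : K ⊆ E := hcover ▸ Set.subset_sUnion_of_mem hK
  exact (hclique K hK x (verts_mono hSK hx) y (verts_mono hSK hy) hxy).of_near
    (sInf_times_le_of_subset hSne hSK) (sInf_times_le_sSup_times hSfin hSne)
    (sSup_times_le_of_subset (hE.subset hKE) hSne hSK)
    (fun t ht hlo hhi => hS.mem_of_near (by omega) hE (hKE ht) (Sym2.mem_mk_left x y) hx (by omega)
      (by omega))
    (fun t ht => mem_lifetime hSfin ht)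

theorem isClusterTemporalGraph_of_forall_saturated {Δ₁ : ℕ} (hΔ : 0 < Δ₂) (hE : E.Finite)
    (h : ∀ S, Saturated Δ₂ E S → IsTemporalClique Δ₁ S) : IsClusterTemporalGraph Δ₁ Δ₂ E := by
  have hind : {S | Maximal (fun U => U ⊆ E ∧ Indivisible Δ₂ U) S}.Pairwise (Indep Δ₂) :=
    fun S hS T hT => indep_of_maximal hE hS hT
  refine ⟨{S | Maximal (fun U => U ⊆ E ∧ Indivisible Δ₂ U) S}, ?_, ?_,
    fun S hS => h S (Saturated.of_maximal hS), hind⟩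
  · exact Set.Subset.antisymm (Set.sUnion_subset fun S hS => hS.1.1)
      fun te hte => exists_maximal_indivisible_mem hE hte
  · intro S hS T hT hST
    exact Set.disjoint_left.2 fun te h₁ h₂ =>
      not_indep_of_mem hΔ (hE.subset hS.1.1) (hE.subset hT.1.1) h₁ h₂ (hind hS hT hST)

end

theorem cluster_iff_saturated_cliques_general (Δ₁ Δ₂ : ℕ) (h2 : Δ₁ < Δ₂)
    (E : Set TimeEdge) (hE : E.Finite) :
    IsClusterTemporalGraph Δ₁ Δ₂ E ↔
      ∀ S : Set TimeEdge, Saturated Δ₂ E S → IsTemporalClique Δ₁ S :=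
  ⟨fun hG _ hS => hG.isTemporalClique_of_saturated h2 hE hS,
    isClusterTemporalGraph_of_forall_saturated (by omega) hE⟩

theorem cluster_iff_saturated_cliques (Δ₁ Δ₂ : ℕ) (h1 : 1 ≤ Δ₁) (h2 : Δ₁ < Δ₂)
    (E : Set TimeEdge) (hE : E.Finite) :
    IsClusterTemporalGraph Δ₁ Δ₂ E ↔
      ∀ S : Set TimeEdge, Saturated Δ₂ E S → IsTemporalClique Δ₁ S :=
  cluster_iff_saturated_cliques_general Δ₁ Δ₂ h2 E hE
end

section
/- Let Δ₂ > Δ₁ ≥ 1 and let G be a temporal graph such that for every set S of at most 5 vertices, G[S] is a (Δ₁,Δ₂)-cluster temporal graph. Then G is a (Δ₁,Δ₂)-cluster temporal graph. -/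
namespace FiveVertexAux

/-! ### Basic helpers -/

lemma sym2_exists (e : Sym2 ℕ) : ∃ x y, e = s(x, y) := by
  induction e using Sym2.ind with
  | _ x y => exact ⟨x, y, rfl⟩

lemma sym2_eq_of_mem {e : Sym2 ℕ} {u v : ℕ} (hu : u ∈ e) (hv : v ∈ e) (huv : u ≠ v) :
    e = s(u, v) := by
  induction e using Sym2.ind with
  | _ x y =>
    rw [Sym2.mem_iff] at hu hv
    rcases hu with rfl | rfl <;> rcases hv with rfl | rfl <;>
      first
      | exact absurd rfl huv
      | rfl
      | exact Sym2.eq_swap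

lemma dist_lt {a b Δ : ℕ} (h₁ : a < b + Δ) (h₂ : b < a + Δ) :
    max a b - min a b < Δ := by
  rcases le_total a b with h | h
  · rw [max_eq_right h, min_eq_left h]; omega
  · rw [max_eq_left h, min_eq_right h]; omega

lemma lt_of_dist {a b Δ : ℕ} (h : max a b - min a b < Δ) :
    a < b + Δ ∧ b < a + Δ := by
  rcases le_total a b with h' | h'
  · rw [max_eq_right h', min_eq_left h'] at h; omega
  · rw [max_eq_left h', min_eq_right h'] at h; omega

lemma not_teindep_iff {Δ₂ : ℕ} {a b : TimeEdge} :
    ¬ TEIndep Δ₂ a b ↔ (∃ v ∈ a.1, v ∈ b.1) ∧ max a.2 b.2 - min a.2 b.2 < Δ₂ := by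
  unfold TEIndep
  push_neg
  rfl

lemma teindep_symm {Δ₂ : ℕ} {a b : TimeEdge} (h : TEIndep Δ₂ a b) : TEIndep Δ₂ b a := by
  rcases h with h | h
  · left; intro v hv hv'; exact h v hv' hv
  · right; rw [max_comm, min_comm]; exact h

lemma not_teindep_refl {Δ₂ : ℕ} (hΔ : 0 < Δ₂) (a : TimeEdge) : ¬ TEIndep Δ₂ a a := by
  rw [not_teindep_iff]
  obtain ⟨x, y, hxy⟩ := sym2_exists a.1
  exact ⟨⟨x, by rw [hxy]; exact Sym2.mem_mk_left .., by rw [hxy]; exact Sym2.mem_mk_left ..⟩,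
    by omega⟩

/-! ### Reachability and components -/

def rel (Δ₂ : ℕ) (E : Set TimeEdge) (a b : TimeEdge) : Prop :=
  a ∈ E ∧ b ∈ E ∧ ¬ TEIndep Δ₂ a b

lemma rel_symm {Δ₂ : ℕ} {E : Set TimeEdge} {a b : TimeEdge} (h : rel Δ₂ E a b) :
    rel Δ₂ E b a :=
  ⟨h.2.1, h.1, fun ht => h.2.2 (teindep_symm ht)⟩

def Reach (Δ₂ : ℕ) (E : Set TimeEdge) : TimeEdge → TimeEdge → Prop :=
  Relation.ReflTransGen (rel Δ₂ E)

lemma reach_symm {Δ₂ : ℕ} {E : Set TimeEdge} {a b : TimeEdge} (h : Reach Δ₂ E a b) :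
    Reach Δ₂ E b a := by
  induction h with
  | refl => exact .refl
  | tail _ h₂ ih => exact .head (rel_symm h₂) ih

def comp (Δ₂ : ℕ) (E : Set TimeEdge) (a : TimeEdge) : Set TimeEdge :=
  {b | b ∈ E ∧ Reach Δ₂ E a b}

lemma mem_comp_self {Δ₂ : ℕ} {E : Set TimeEdge} {a : TimeEdge} (ha : a ∈ E) :
    a ∈ comp Δ₂ E a := ⟨ha, .refl⟩

lemma comp_subset {Δ₂ : ℕ} {E : Set TimeEdge} {a : TimeEdge} : comp Δ₂ E a ⊆ E :=
  fun _ h => h.1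

lemma comp_eq {Δ₂ : ℕ} {E : Set TimeEdge} {a b : TimeEdge} (hb : b ∈ comp Δ₂ E a) :
    comp Δ₂ E b = comp Δ₂ E a := by
  ext c
  exact ⟨fun hc => ⟨hc.1, hb.2.trans hc.2⟩, fun hc => ⟨hc.1, (reach_symm hb.2).trans hc.2⟩⟩

/-! ### times / verts / lifetime helpers -/

lemma times_finite {S : Set TimeEdge} (h : S.Finite) : (times S).Finite := h.image _

lemma mem_times {S : Set TimeEdge} {te : TimeEdge} (h : te ∈ S) : te.2 ∈ times S :=
  ⟨te, h, rfl⟩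

lemma exists_at {S : Set TimeEdge} {t : ℕ} (h : t ∈ times S) : ∃ te ∈ S, te.2 = t := h

lemma sInf_times_le {S : Set TimeEdge} {te : TimeEdge} (h : te ∈ S) :
    sInf (times S) ≤ te.2 := Nat.sInf_le (mem_times h)

lemma le_sSup_times {S : Set TimeEdge} {te : TimeEdge} (hfin : S.Finite) (h : te ∈ S) :
    te.2 ≤ sSup (times S) := le_csSup (times_finite hfin).bddAbove (mem_times h)

lemma mem_lifetime' {S : Set TimeEdge} {te : TimeEdge} (hfin : S.Finite) (h : te ∈ S) :
    te.2 ∈ lifetime S := Set.mem_Icc.mpr ⟨sInf_times_le h, le_sSup_times hfin h⟩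

lemma mem_verts {S : Set TimeEdge} {te : TimeEdge} {v : ℕ} (hte : te ∈ S) (hv : v ∈ te.1) :
    v ∈ verts S := ⟨te, hte, hv⟩

lemma indep_teindep {Δ₂ : ℕ} {S₁ S₂ : Set TimeEdge} (h : Indep Δ₂ S₁ S₂)
    (h₁ : S₁.Finite) (h₂ : S₂.Finite) {a b : TimeEdge} (ha : a ∈ S₁) (hb : b ∈ S₂) :
    TEIndep Δ₂ a b := by
  rcases h with h | h
  · left; intro v hv hv'
    exact Set.disjoint_left.mp h (mem_verts ha hv) (mem_verts hb hv')
  · right; exact h a.2 (mem_lifetime' h₁ ha) b.2 (mem_lifetime' h₂ hb)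

lemma induced_subset {E : Set TimeEdge} {A : Set ℕ} : induced E A ⊆ E :=
  Set.sep_subset _ _

lemma mem_induced {E : Set TimeEdge} {A : Set ℕ} {te : TimeEdge} (hte : te ∈ E)
    (h : ∀ v ∈ te.1, v ∈ A) : te ∈ induced E A := ⟨hte, h⟩

/-! ### Partition helpers -/

lemma part_sub {P : Set (Set TimeEdge)} {E : Set TimeEdge} {A : Set ℕ}
    (hPU : ⋃₀ P = induced E A) {K : Set TimeEdge} (hK : K ∈ P) : K ⊆ induced E A := by
  rw [← hPU]; exact Set.subset_sUnion_of_mem hK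

lemma find_part {P : Set (Set TimeEdge)} {E : Set TimeEdge} {A : Set ℕ}
    (hPU : ⋃₀ P = induced E A) {te : TimeEdge} (h : te ∈ induced E A) :
    ∃ K ∈ P, te ∈ K := by
  rw [← hPU] at h; exact h

lemma same_part {Δ₂ : ℕ} {P : Set (Set TimeEdge)} {E : Set TimeEdge} {A : Set ℕ}
    (hE : E.Finite) (hPU : ⋃₀ P = induced E A) (hPI : P.Pairwise (Indep Δ₂))
    {K : Set TimeEdge} {te te' : TimeEdge} (hK : K ∈ P) (hte : te ∈ K)
    (h' : te' ∈ induced E A) (hnd : ¬ TEIndep Δ₂ te te') : te' ∈ K := by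
  obtain ⟨K', hK', hte'⟩ := find_part hPU h'
  by_cases he : K = K'
  · exact he ▸ hte'
  · exact absurd (indep_teindep (hPI hK hK' he)
      (hE.subset ((part_sub hPU hK).trans induced_subset))
      (hE.subset ((part_sub hPU hK').trans induced_subset)) hte hte') hnd

lemma ncard5 (a b c d e : ℕ) : ({a, b, c, d, e} : Set ℕ).ncard ≤ 5 := by
  refine le_trans (Set.ncard_insert_le _ _) ?_
  refine le_trans (Nat.add_le_add_right (Set.ncard_insert_le _ _) 1) ?_
  refine le_trans (Nat.add_le_add_right (Nat.add_le_add_right (Set.ncard_insert_le _ _) 1) 1) ?_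
  refine le_trans (Nat.add_le_add_right (Nat.add_le_add_right (Nat.add_le_add_right
    (Set.ncard_insert_le _ _) 1) 1) 1) ?_
  simp [Set.ncard_singleton]

lemma finite5 (a b c d e : ℕ) : ({a, b, c, d, e} : Set ℕ).Finite :=
  ((((Set.finite_singleton e).insert d).insert c).insert b).insert a

end FiveVertexAux
namespace FiveVertexAux

/-! ### Clique density extraction -/

lemma clique_window {Δ₁ : ℕ} {K : Set TimeEdge} (h1 : 1 ≤ Δ₁)
    (hK : IsTemporalClique Δ₁ K) {x y : ℕ} (hx : x ∈ verts K) (hy : y ∈ verts K)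
    (hxy : x ≠ y) {τ' : ℕ} (hlo : sInf (times K) ≤ τ')
    (hhi : τ' + Δ₁ ≤ sSup (times K) + 1) :
    ∃ t, τ' ≤ t ∧ t ≤ τ' + Δ₁ - 1 ∧ (s(x, y), t) ∈ K := by
  have hτ : τ' ∈ Set.Icc (sInf (times K)) (max (sInf (times K)) (sSup (times K) + 1 - Δ₁)) :=
    Set.mem_Icc.mpr ⟨hlo, le_max_of_le_right (by omega)⟩
  obtain ⟨t, ht, htK⟩ := hK x hx y hy hxy τ' hτ
  rw [Set.mem_Icc] at ht
  exact ⟨t, ht.1, ht.2, htK⟩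

lemma clique_near {Δ₁ : ℕ} {K : Set TimeEdge} (h1 : 1 ≤ Δ₁)
    (hK : IsTemporalClique Δ₁ K) {x y : ℕ} (hx : x ∈ verts K) (hy : y ∈ verts K)
    (hxy : x ≠ y) {γ : ℕ} (hg1 : sInf (times K) ≤ γ) (hg2 : γ ≤ sSup (times K)) :
    ∃ t, (s(x, y), t) ∈ K ∧ γ < t + Δ₁ ∧ t < γ + Δ₁ := by
  set α := sInf (times K) with hα
  set β := sSup (times K) with hβ
  set M := max α (β + 1 - Δ₁) with hM
  have hτmem : min γ M ∈ Set.Icc α M :=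
    Set.mem_Icc.mpr ⟨le_min hg1 (le_max_left _ _), min_le_right _ _⟩
  obtain ⟨t, ht, htK⟩ := hK x hx y hy hxy (min γ M) hτmem
  rw [Set.mem_Icc] at ht
  have hmle : min γ M ≤ γ := min_le_left _ _
  refine ⟨t, htK, ?_, by omega⟩
  rcases le_total γ M with h | h
  · have : min γ M = γ := min_eq_left h
    omega
  · have hmin : min γ M = M := min_eq_right h
    rcases le_total α (β + 1 - Δ₁) with h' | h'
    · have : M = β + 1 - Δ₁ := max_eq_right h'
      omega
    · have : M = α := max_eq_left h'
      omega

/-! ### Chains of appearances and clique connectivity -/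

lemma chk {Δ₁ Δ₂ : ℕ} {E K : Set TimeEdge} (h1 : 1 ≤ Δ₁) (h12 : Δ₁ < Δ₂)
    (hKfin : K.Finite) (hKE : K ⊆ E) (hK : IsTemporalClique Δ₁ K) {x y : ℕ}
    (hx : x ∈ verts K) (hy : y ∈ verts K) (hxy : x ≠ y) :
    ∀ d t t', t ≤ t' → t' ≤ t + d → (s(x, y), t) ∈ K → (s(x, y), t') ∈ K →
      Reach Δ₂ E (s(x, y), t) (s(x, y), t') := by
  intro d
  induction d with
  | zero =>
    intro t t' h h' _ _
    have : t = t' := by omega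
    subst this; exact .refl
  | succ d ih =>
    intro t t' hle hub htK ht'K
    by_cases hcase : t' ≤ t + d
    · exact ih t t' hle hcase htK ht'K
    · by_cases hclose : t' < t + Δ₂
      · refine Relation.ReflTransGen.single ⟨hKE htK, hKE ht'K, ?_⟩
        rw [not_teindep_iff]
        exact ⟨⟨x, Sym2.mem_mk_left .., Sym2.mem_mk_left ..⟩, dist_lt (by omega) (by omega)⟩
      · push_neg at hclose
        have hsup : t' ≤ sSup (times K) := le_sSup_times hKfin ht'K
        have hinf : sInf (times K) ≤ t := sInf_times_le htK
        obtain ⟨t'', h₁, h₂, hK''⟩ := clique_window h1 hK hx hy hxy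
          (τ' := t + 1) (by omega) (by omega)
        have hrel : rel Δ₂ E (s(x, y), t) (s(x, y), t'') := by
          refine ⟨hKE htK, hKE hK'', ?_⟩
          rw [not_teindep_iff]
          exact ⟨⟨x, Sym2.mem_mk_left .., Sym2.mem_mk_left ..⟩, dist_lt (by omega) (by omega)⟩
        exact .head hrel (ih t'' t' (by omega) (by omega) hK'' ht'K)

lemma kconn {Δ₁ Δ₂ : ℕ} {E K : Set TimeEdge} (h1 : 1 ≤ Δ₁) (h12 : Δ₁ < Δ₂)
    (hKfin : K.Finite) (hKE : K ⊆ E) (hK : IsTemporalClique Δ₁ K) {x y : ℕ}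
    (hx : x ∈ verts K) (hy : y ∈ verts K) (hxy : x ≠ y) {te te' : TimeEdge}
    (hte : te ∈ K) (hte' : te' ∈ K) : Reach Δ₂ E te te' := by
  obtain ⟨p, p₂, hp12⟩ := sym2_exists te.1
  obtain ⟨q, q₂, hq12⟩ := sym2_exists te'.1
  have hp : p ∈ te.1 := by rw [hp12]; exact Sym2.mem_mk_left ..
  have hq : q ∈ te'.1 := by rw [hq12]; exact Sym2.mem_mk_left ..
  have hpv : p ∈ verts K := mem_verts hte hp
  have hqv : q ∈ verts K := mem_verts hte' hq
  -- helper for connecting via a common edge s(u, w)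
  have main : ∀ u w : ℕ, u ≠ w → u ∈ verts K → w ∈ verts K → u ∈ te.1 → u ∈ te'.1 ∨ w ∈ te'.1 →
      Reach Δ₂ E te te' := by
    intro u w huw hu hw hute hu'
    obtain ⟨t₁, ht₁K, ht₁a, ht₁b⟩ := clique_near h1 hK hu hw huw
      (sInf_times_le hte) (le_sSup_times hKfin hte)
    obtain ⟨t₂, ht₂K, ht₂a, ht₂b⟩ := clique_near h1 hK hu hw huw
      (sInf_times_le hte') (le_sSup_times hKfin hte')
    have hrel₁ : rel Δ₂ E te (s(u, w), t₁) := by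
      refine ⟨hKE hte, hKE ht₁K, ?_⟩
      rw [not_teindep_iff]
      exact ⟨⟨u, hute, Sym2.mem_mk_left ..⟩, dist_lt (by omega) (by omega)⟩
    have hrel₂ : rel Δ₂ E te' (s(u, w), t₂) := by
      refine ⟨hKE hte', hKE ht₂K, ?_⟩
      rw [not_teindep_iff]
      refine ⟨?_, dist_lt (by omega) (by omega)⟩
      rcases hu' with h | h
      · exact ⟨u, h, Sym2.mem_mk_left ..⟩
      · exact ⟨w, h, Sym2.mem_mk_right ..⟩
    have hchain : Reach Δ₂ E (s(u, w), t₁) (s(u, w), t₂) := by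
      rcases le_total t₁ t₂ with h | h
      · exact chk h1 h12 hKfin hKE hK hu hw huw (t₂ - t₁) t₁ t₂ h (by omega) ht₁K ht₂K
      · exact reach_symm
          (chk h1 h12 hKfin hKE hK hu hw huw (t₁ - t₂) t₂ t₁ h (by omega) ht₂K ht₁K)
    exact ((Relation.ReflTransGen.single hrel₁).trans hchain).trans
      (reach_symm (.single hrel₂))
  by_cases hpq : p = q
  · subst hpq
    by_cases hxp : x = p
    · exact main p y (hxp ▸ hxy) hpv hy hp (Or.inl hq)
    · exact main p x (fun h => hxp h.symm) hpv hx hp (Or.inl hq)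
  · exact main p q hpq hpv hqv hp (Or.inr hq)

end FiveVertexAux
namespace FiveVertexAux

/-! ### The carrier lemma -/

lemma carrier {Δ₁ Δ₂ : ℕ} {E : Set TimeEdge} (h1 : 1 ≤ Δ₁) (h12 : Δ₁ < Δ₂)
    (hE : E.Finite)
    (h5 : ∀ A : Set ℕ, A.Finite → A.ncard ≤ 5 → IsClusterTemporalGraph Δ₁ Δ₂ (induced E A))
    {a b : TimeEdge} (hab : Reach Δ₂ E a b) (haE : a ∈ E) :
    ∀ p q, p ∈ a.1 → q ∈ b.1 → p ≠ q →
      ∃ th, (s(p, q), th) ∈ E ∧ Reach Δ₂ E a (s(p, q), th) ∧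
        b.2 < th + Δ₁ ∧ th < b.2 + Δ₁ := by
  induction hab with
  | refl =>
    intro p q hp hq hpq
    have ha1 : a.1 = s(p, q) := sym2_eq_of_mem hp hq hpq
    have ha : (s(p, q), a.2) = a := by
      rw [← ha1]
    refine ⟨a.2, ?_, ?_, by omega, by omega⟩
    · rw [ha]; exact haE
    · rw [ha]; exact .refl
  | @tail b c hab hbc ih =>
    intro p q hp hq hpq
    obtain ⟨⟨z, hzb, hzc⟩, hdist⟩ := not_teindep_iff.mp hbc.2.2
    -- carrier of p near b
    obtain ⟨cp, hcpE, hcpR, hcpP, hcpA, hcpNd⟩ :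
        ∃ cp : TimeEdge, cp ∈ E ∧ Reach Δ₂ E a cp ∧ p ∈ cp.1 ∧
          (∀ v ∈ cp.1, v = p ∨ v ∈ b.1) ∧ ¬ TEIndep Δ₂ cp b := by
      by_cases hpz : p = z
      · exact ⟨b, hbc.1, hab, hpz ▸ hzb, fun v hv => Or.inr hv,
          not_teindep_refl (by omega) b⟩
      · obtain ⟨th, h₁, h₂, h₃, h₄⟩ := ih p z hp hzb hpz
        refine ⟨(s(p, z), th), h₁, h₂, Sym2.mem_mk_left .., ?_, ?_⟩
        · intro v hv
          rcases Sym2.mem_iff.mp hv with rfl | rfl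
          · exact Or.inl rfl
          · exact Or.inr hzb
        · rw [not_teindep_iff]
          exact ⟨⟨z, Sym2.mem_mk_right .., hzb⟩, dist_lt (by omega) (by omega)⟩
    -- the 5-vertex configuration
    obtain ⟨ob, hob⟩ : ∃ ob, b.1 = s(z, ob) := ⟨(Sym2.Mem.other hzb), (Sym2.other_spec hzb).symm⟩
    obtain ⟨oc, hoc⟩ : ∃ oc, c.1 = s(z, oc) := ⟨(Sym2.Mem.other hzc), (Sym2.other_spec hzc).symm⟩
    set A : Set ℕ := {p, q, z, ob, oc} with hA
    have hbA : ∀ v ∈ b.1, v ∈ A := by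
      intro v hv
      rw [hob] at hv
      rcases Sym2.mem_iff.mp hv with rfl | rfl
      · simp [hA]
      · simp [hA]
    have hcA : ∀ v ∈ c.1, v ∈ A := by
      intro v hv
      rw [hoc] at hv
      rcases Sym2.mem_iff.mp hv with rfl | rfl
      · simp [hA]
      · simp [hA]
    have hcpA' : ∀ v ∈ cp.1, v ∈ A := by
      intro v hv
      rcases hcpA v hv with rfl | h
      · simp [hA]
      · exact hbA v h
    obtain ⟨P, hPU, hPD, hPC, hPI⟩ := h5 A (finite5 p q z ob oc) (ncard5 p q z ob oc)
    obtain ⟨K, hKP, hcK⟩ := find_part hPU (mem_induced hbc.2.1 hcA)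
    have hbK : b ∈ K := same_part hE hPU hPI hKP hcK (mem_induced hbc.1 hbA)
      (fun h => hbc.2.2 (teindep_symm h))
    have hcpK : cp ∈ K := same_part hE hPU hPI hKP hbK (mem_induced hcpE hcpA')
      (fun h => hcpNd (teindep_symm h))
    have hKfin : K.Finite := hE.subset ((part_sub hPU hKP).trans induced_subset)
    have hKE : K ⊆ E := (part_sub hPU hKP).trans induced_subset
    have hKcl : IsTemporalClique Δ₁ K := hPC K hKP
    have hpvK : p ∈ verts K := mem_verts hcpK hcpP
    have hqvK : q ∈ verts K := mem_verts hcK hq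
    obtain ⟨th, hthK, htha, hthb⟩ := clique_near h1 hKcl hpvK hqvK hpq
      (sInf_times_le hcK) (le_sSup_times hKfin hcK)
    refine ⟨th, hKE hthK, ?_, htha, hthb⟩
    exact (hab.tail hbc).trans (kconn h1 h12 hKfin hKE hKcl hpvK hqvK hpq hcK hthK)

end FiveVertexAux
namespace FiveVertexAux

/-! ### Bridges across cuts -/

lemma bridge {Δ₂ : ℕ} {E : Set TimeEdge} (Q : TimeEdge → Prop) {a b : TimeEdge}
    (hab : Reach Δ₂ E a b) (hQa : Q a) (hQb : ¬ Q b) :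
    ∃ y y', rel Δ₂ E y y' ∧ Reach Δ₂ E a y ∧ Q y ∧ ¬ Q y' := by
  induction hab with
  | refl => exact absurd hQa hQb
  | @tail b c hab hbc ih =>
    by_cases hQb' : Q b
    · exact ⟨b, c, hbc, hab, hQb', hQb⟩
    · exact ih hQb'

/-! ### The sweeping steps -/

lemma step_up {Δ₁ Δ₂ : ℕ} {E : Set TimeEdge} (h1 : 1 ≤ Δ₁) (h12 : Δ₁ < Δ₂)
    (hE : E.Finite)
    (h5 : ∀ A : Set ℕ, A.Finite → A.ncard ≤ 5 → IsClusterTemporalGraph Δ₁ Δ₂ (induced E A))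
    {p q t : ℕ} (hpq : p ≠ q) (haE : (s(p, q), t) ∈ E)
    (hβ : t + Δ₁ ≤ sSup (times (comp Δ₂ E (s(p, q), t)))) :
    ∃ th, (s(p, q), th) ∈ E ∧ Reach Δ₂ E (s(p, q), t) (s(p, q), th) ∧
      t < th ∧ th ≤ t + Δ₁ := by
  set a : TimeEdge := (s(p, q), t) with ha
  set C := comp Δ₂ E a with hC
  have hCfin : C.Finite := hE.subset comp_subset
  have haC : a ∈ C := mem_comp_self haE
  -- the largest time of C below t + Δ₁
  set Tm := {t' ∈ times C | t' < t + Δ₁} with hTm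
  have hTmfin : Tm.Finite := (times_finite hCfin).subset (Set.sep_subset _ _)
  have htTm : t ∈ Tm := ⟨mem_times haC, by omega⟩
  set m := sSup Tm with hm
  have hmTm : m ∈ Tm := Nat.sSup_mem ⟨t, htTm⟩ hTmfin.bddAbove
  have htm : t ≤ m := le_csSup hTmfin.bddAbove htTm
  -- an edge at the maximum time of C
  have hβtime : sSup (times C) ∈ times C :=
    Nat.sSup_mem ⟨t, mem_times haC⟩ (times_finite hCfin).bddAbove
  obtain ⟨eβ, heβC, heβ2⟩ := exists_at hβtime
  -- bridge across the cut at m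
  have ha2 : a.2 = t := rfl
  obtain ⟨y, y', hrel, hray, hQy, hQy'⟩ := bridge (fun te => te.2 ≤ m) heβC.2 htm
    (by show ¬ eβ.2 ≤ m; have h' : m < t + Δ₁ := hmTm.2; rw [heβ2]; omega)
  have hQy2 : y.2 ≤ m := hQy
  have hQy2' : ¬ y'.2 ≤ m := hQy'
  have hy'E : y' ∈ E := hrel.2.1
  have hy'C : y' ∈ C := ⟨hy'E, hray.tail hrel⟩
  have hy'hi : t + Δ₁ ≤ y'.2 := by
    by_contra h
    push_neg at h
    exact absurd (le_csSup hTmfin.bddAbove ⟨mem_times hy'C, h⟩) (by omega)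
  obtain ⟨⟨vy, hvy, hvy'⟩, hdd⟩ := not_teindep_iff.mp hrel.2.2
  have hyy'1 : y.2 < y'.2 + Δ₂ := (lt_of_dist hdd).1
  have hyy'2 : y'.2 < y.2 + Δ₂ := (lt_of_dist hdd).2
  have hmlt : m < t + Δ₁ := hmTm.2
  -- carrier of p near y'
  obtain ⟨cp, hcpE, hcpR, hcpP, hcpA, hcpNd⟩ :
      ∃ cp : TimeEdge, cp ∈ E ∧ Reach Δ₂ E a cp ∧ p ∈ cp.1 ∧
        (∀ v ∈ cp.1, v = p ∨ v ∈ y'.1) ∧ ¬ TEIndep Δ₂ cp y' := by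
    by_cases hpv : p = vy
    · exact ⟨y', hy'E, hray.tail hrel, hpv ▸ hvy', fun v hv => Or.inr hv,
        not_teindep_refl (by omega) y'⟩
    · obtain ⟨tc, h₁, h₂, h₃, h₄⟩ := carrier h1 h12 hE h5 (hray.tail hrel) haE p vy
        (Sym2.mem_mk_left ..) hvy' hpv
      refine ⟨(s(p, vy), tc), h₁, h₂, Sym2.mem_mk_left .., ?_, ?_⟩
      · intro v hv
        rcases Sym2.mem_iff.mp hv with rfl | rfl
        · exact Or.inl rfl
        · exact Or.inr hvy'
      · rw [not_teindep_iff]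
        exact ⟨⟨vy, Sym2.mem_mk_right .., hvy'⟩, dist_lt (by omega) (by omega)⟩
  -- the 5-vertex configuration
  obtain ⟨oy, hoy⟩ : ∃ oy, y.1 = s(vy, oy) := ⟨Sym2.Mem.other hvy, (Sym2.other_spec hvy).symm⟩
  obtain ⟨oy', hoy'⟩ : ∃ oy', y'.1 = s(vy, oy') :=
    ⟨Sym2.Mem.other hvy', (Sym2.other_spec hvy').symm⟩
  set A : Set ℕ := {p, q, vy, oy, oy'} with hA
  have hyA : ∀ v ∈ y.1, v ∈ A := by
    intro v hv; rw [hoy] at hv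
    rcases Sym2.mem_iff.mp hv with rfl | rfl <;> simp [hA]
  have hy'A : ∀ v ∈ y'.1, v ∈ A := by
    intro v hv; rw [hoy'] at hv
    rcases Sym2.mem_iff.mp hv with rfl | rfl <;> simp [hA]
  have hcpA' : ∀ v ∈ cp.1, v ∈ A := by
    intro v hv
    rcases hcpA v hv with rfl | h
    · simp [hA]
    · exact hy'A v h
  have haA : ∀ v ∈ a.1, v ∈ A := by
    intro v hv
    rcases Sym2.mem_iff.mp hv with rfl | rfl <;> simp [hA]
  obtain ⟨P, hPU, hPD, hPC, hPI⟩ := h5 A (finite5 p q vy oy oy') (ncard5 p q vy oy oy')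
  obtain ⟨K, hKP, hy'K⟩ := find_part hPU (mem_induced hy'E hy'A)
  have hyK : y ∈ K := same_part hE hPU hPI hKP hy'K (mem_induced hrel.1 hyA)
    (fun h => hrel.2.2 (teindep_symm h))
  have hcpK : cp ∈ K := same_part hE hPU hPI hKP hy'K (mem_induced hcpE hcpA')
    (fun h => hcpNd (teindep_symm h))
  have hKfin : K.Finite := hE.subset ((part_sub hPU hKP).trans induced_subset)
  have hKE : K ⊆ E := (part_sub hPU hKP).trans induced_subset
  have hKcl : IsTemporalClique Δ₁ K := hPC K hKP
  -- a belongs to the same part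
  obtain ⟨L, hLP, haL⟩ := find_part hPU (mem_induced haE haA)
  have hLfin : L.Finite := hE.subset ((part_sub hPU hLP).trans induced_subset)
  have haK : a ∈ K := by
    by_cases hLK : L = K
    · exact hLK ▸ haL
    · exfalso
      rcases hPI hLP hKP hLK with hdisj | hfar
      · exact Set.disjoint_left.mp hdisj (mem_verts haL (Sym2.mem_mk_left ..))
          (mem_verts hcpK hcpP)
      · have h₁ : a.2 ∈ lifetime L := mem_lifetime' hLfin haL
        have h₂ : y.2 ∈ lifetime K := mem_lifetime' hKfin hyK
        have := hfar a.2 h₁ y.2 h₂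
        have hya : max a.2 y.2 - min a.2 y.2 < Δ₂ := dist_lt (by omega) (by omega)
        omega
  -- extract the appearance in the window (t, t + Δ₁]
  have hqvK : q ∈ verts K := mem_verts haK (Sym2.mem_mk_right ..)
  have hpvK : p ∈ verts K := mem_verts hcpK hcpP
  obtain ⟨th, hth1, hth2, hthK⟩ := clique_window h1 hKcl hpvK hqvK hpq
    (τ' := t + 1) (by have := sInf_times_le haK; omega)
    (by have := le_sSup_times hKfin hy'K; omega)
  have hth2' : th ≤ t + Δ₁ := by omega
  refine ⟨th, hKE hthK, Relation.ReflTransGen.single ⟨haE, hKE hthK, ?_⟩, by omega, hth2'⟩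
  rw [not_teindep_iff]
  exact ⟨⟨p, Sym2.mem_mk_left .., Sym2.mem_mk_left ..⟩, dist_lt (by omega) (by omega)⟩

end FiveVertexAux
namespace FiveVertexAux

lemma step_down {Δ₁ Δ₂ : ℕ} {E : Set TimeEdge} (h1 : 1 ≤ Δ₁) (h12 : Δ₁ < Δ₂)
    (hE : E.Finite)
    (h5 : ∀ A : Set ℕ, A.Finite → A.ncard ≤ 5 → IsClusterTemporalGraph Δ₁ Δ₂ (induced E A))
    {p q t : ℕ} (hpq : p ≠ q) (haE : (s(p, q), t) ∈ E)
    (hα : sInf (times (comp Δ₂ E (s(p, q), t))) + Δ₁ ≤ t) :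
    ∃ th, (s(p, q), th) ∈ E ∧ Reach Δ₂ E (s(p, q), t) (s(p, q), th) ∧
      th < t ∧ t ≤ th + Δ₁ := by
  set a : TimeEdge := (s(p, q), t) with ha
  set C := comp Δ₂ E a with hC
  have hCfin : C.Finite := hE.subset comp_subset
  have haC : a ∈ C := mem_comp_self haE
  have ha2 : a.2 = t := rfl
  set Tm := {t' ∈ times C | t < t' + Δ₁} with hTm
  have hTmfin : Tm.Finite := (times_finite hCfin).subset (Set.sep_subset _ _)
  have htTm : t ∈ Tm := ⟨mem_times haC, by omega⟩
  set m := sInf Tm with hm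
  have hmTm : m ∈ Tm := Nat.sInf_mem ⟨t, htTm⟩
  have htm : m ≤ t := Nat.sInf_le htTm
  have hmlt : t < m + Δ₁ := hmTm.2
  -- an edge at the minimum time of C
  have hαtime : sInf (times C) ∈ times C := Nat.sInf_mem ⟨t, mem_times haC⟩
  obtain ⟨eα, heαC, heα2⟩ := exists_at hαtime
  -- bridge across the cut at m
  obtain ⟨y, y', hrel, hray, hQy, hQy'⟩ := bridge (fun te => m ≤ te.2) heαC.2
    (show m ≤ a.2 by omega)
    (by show ¬ m ≤ eα.2; rw [heα2]; omega)
  have hQy2 : m ≤ y.2 := hQy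
  have hQy2' : ¬ m ≤ y'.2 := hQy'
  have hy'E : y' ∈ E := hrel.2.1
  have hy'C : y' ∈ C := ⟨hy'E, hray.tail hrel⟩
  have hy'lo : y'.2 + Δ₁ ≤ t := by
    by_contra h
    push_neg at h
    exact hQy2' (Nat.sInf_le ⟨mem_times hy'C, by omega⟩)
  obtain ⟨⟨vy, hvy, hvy'⟩, hdd⟩ := not_teindep_iff.mp hrel.2.2
  have hyy'1 : y.2 < y'.2 + Δ₂ := (lt_of_dist hdd).1
  have hyy'2 : y'.2 < y.2 + Δ₂ := (lt_of_dist hdd).2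
  -- carrier of p near y'
  obtain ⟨cp, hcpE, hcpR, hcpP, hcpA, hcpNd⟩ :
      ∃ cp : TimeEdge, cp ∈ E ∧ Reach Δ₂ E a cp ∧ p ∈ cp.1 ∧
        (∀ v ∈ cp.1, v = p ∨ v ∈ y'.1) ∧ ¬ TEIndep Δ₂ cp y' := by
    by_cases hpv : p = vy
    · exact ⟨y', hy'E, hray.tail hrel, hpv ▸ hvy', fun v hv => Or.inr hv,
        not_teindep_refl (by omega) y'⟩
    · obtain ⟨tc, h₁, h₂, h₃, h₄⟩ := carrier h1 h12 hE h5 (hray.tail hrel) haE p vy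
        (Sym2.mem_mk_left ..) hvy' hpv
      refine ⟨(s(p, vy), tc), h₁, h₂, Sym2.mem_mk_left .., ?_, ?_⟩
      · intro v hv
        rcases Sym2.mem_iff.mp hv with rfl | rfl
        · exact Or.inl rfl
        · exact Or.inr hvy'
      · rw [not_teindep_iff]
        exact ⟨⟨vy, Sym2.mem_mk_right .., hvy'⟩, dist_lt (by omega) (by omega)⟩
  -- the 5-vertex configuration
  obtain ⟨oy, hoy⟩ : ∃ oy, y.1 = s(vy, oy) := ⟨Sym2.Mem.other hvy, (Sym2.other_spec hvy).symm⟩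
  obtain ⟨oy', hoy'⟩ : ∃ oy', y'.1 = s(vy, oy') :=
    ⟨Sym2.Mem.other hvy', (Sym2.other_spec hvy').symm⟩
  set A : Set ℕ := {p, q, vy, oy, oy'} with hA
  have hyA : ∀ v ∈ y.1, v ∈ A := by
    intro v hv; rw [hoy] at hv
    rcases Sym2.mem_iff.mp hv with rfl | rfl <;> simp [hA]
  have hy'A : ∀ v ∈ y'.1, v ∈ A := by
    intro v hv; rw [hoy'] at hv
    rcases Sym2.mem_iff.mp hv with rfl | rfl <;> simp [hA]
  have hcpA' : ∀ v ∈ cp.1, v ∈ A := by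
    intro v hv
    rcases hcpA v hv with rfl | h
    · simp [hA]
    · exact hy'A v h
  have haA : ∀ v ∈ a.1, v ∈ A := by
    intro v hv
    rcases Sym2.mem_iff.mp hv with rfl | rfl <;> simp [hA]
  obtain ⟨P, hPU, hPD, hPC, hPI⟩ := h5 A (finite5 p q vy oy oy') (ncard5 p q vy oy oy')
  obtain ⟨K, hKP, hy'K⟩ := find_part hPU (mem_induced hy'E hy'A)
  have hyK : y ∈ K := same_part hE hPU hPI hKP hy'K (mem_induced hrel.1 hyA)
    (fun h => hrel.2.2 (teindep_symm h))
  have hcpK : cp ∈ K := same_part hE hPU hPI hKP hy'K (mem_induced hcpE hcpA')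
    (fun h => hcpNd (teindep_symm h))
  have hKfin : K.Finite := hE.subset ((part_sub hPU hKP).trans induced_subset)
  have hKE : K ⊆ E := (part_sub hPU hKP).trans induced_subset
  have hKcl : IsTemporalClique Δ₁ K := hPC K hKP
  obtain ⟨L, hLP, haL⟩ := find_part hPU (mem_induced haE haA)
  have hLfin : L.Finite := hE.subset ((part_sub hPU hLP).trans induced_subset)
  have haK : a ∈ K := by
    by_cases hLK : L = K
    · exact hLK ▸ haL
    · exfalso
      rcases hPI hLP hKP hLK with hdisj | hfar
      · exact Set.disjoint_left.mp hdisj (mem_verts haL (Sym2.mem_mk_left ..))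
          (mem_verts hcpK hcpP)
      · have h₁ : a.2 ∈ lifetime L := mem_lifetime' hLfin haL
        have h₂ : y.2 ∈ lifetime K := mem_lifetime' hKfin hyK
        have := hfar a.2 h₁ y.2 h₂
        have hya : max a.2 y.2 - min a.2 y.2 < Δ₂ := dist_lt (by omega) (by omega)
        omega
  have hqvK : q ∈ verts K := mem_verts haK (Sym2.mem_mk_right ..)
  have hpvK : p ∈ verts K := mem_verts hcpK hcpP
  obtain ⟨th, hth1, hth2, hthK⟩ := clique_window h1 hKcl hpvK hqvK hpq
    (τ' := t - Δ₁) (by have := sInf_times_le hy'K; omega)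
    (by have := le_sSup_times hKfin haK; omega)
  have hth2' : th < t ∧ t ≤ th + Δ₁ := by omega
  refine ⟨th, hKE hthK, Relation.ReflTransGen.single ⟨haE, hKE hthK, ?_⟩,
    hth2'.1, hth2'.2⟩
  rw [not_teindep_iff]
  exact ⟨⟨p, Sym2.mem_mk_left .., Sym2.mem_mk_left ..⟩, dist_lt (by omega) (by omega)⟩

end FiveVertexAux
namespace FiveVertexAux

lemma exist_app {Δ₁ Δ₂ : ℕ} {E : Set TimeEdge} (h1 : 1 ≤ Δ₁) (h12 : Δ₁ < Δ₂)
    (hE : E.Finite)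
    (h5 : ∀ A : Set ℕ, A.Finite → A.ncard ≤ 5 → IsClusterTemporalGraph Δ₁ Δ₂ (induced E A))
    {a : TimeEdge} (haE : a ∈ E) {x y : ℕ} (hx : x ∈ verts (comp Δ₂ E a))
    (hy : y ∈ verts (comp Δ₂ E a)) (hxy : x ≠ y) :
    ∃ t₀, (s(x, y), t₀) ∈ E ∧ Reach Δ₂ E a (s(x, y), t₀) := by
  obtain ⟨tx, htxC, hxtx⟩ := hx
  obtain ⟨ty, htyC, hyty⟩ := hy
  have hr : Reach Δ₂ E tx ty := (reach_symm htxC.2).trans htyC.2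
  obtain ⟨t₀, h₁, h₂, _, _⟩ := carrier h1 h12 hE h5 hr htxC.1 x y hxtx hyty hxy
  exact ⟨t₀, h₁, htxC.2.trans h₂⟩

lemma comp_clique {Δ₁ Δ₂ : ℕ} {E : Set TimeEdge} (h1 : 1 ≤ Δ₁) (h12 : Δ₁ < Δ₂)
    (hE : E.Finite)
    (h5 : ∀ A : Set ℕ, A.Finite → A.ncard ≤ 5 → IsClusterTemporalGraph Δ₁ Δ₂ (induced E A))
    {a : TimeEdge} (haE : a ∈ E) : IsTemporalClique Δ₁ (comp Δ₂ E a) := by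
  intro x hx y hy hxy
  set C := comp Δ₂ E a with hC
  have hCfin : C.Finite := hE.subset comp_subset
  have haC : a ∈ C := mem_comp_self haE
  set α := sInf (times C) with hα
  set β := sSup (times C) with hβ
  intro τ hτ
  obtain ⟨hτ1, hτ2⟩ := Set.mem_Icc.mp hτ
  set T := {t' | (s(x, y), t') ∈ E ∧ Reach Δ₂ E a (s(x, y), t')} with hT
  have hTC : ∀ t', t' ∈ T → (s(x, y), t') ∈ C := fun t' ht' => ⟨ht'.1, ht'.2⟩
  have hTsub : T ⊆ times C := fun t' ht' => mem_times (hTC t' ht')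
  have hTfin : T.Finite := (times_finite hCfin).subset hTsub
  have hTne : T.Nonempty := by
    obtain ⟨t₀, h₁, h₂⟩ := exist_app h1 h12 hE h5 haE hx hy hxy
    exact ⟨t₀, h₁, h₂⟩
  have hbound : ∀ t' ∈ T, α ≤ t' ∧ t' ≤ β := fun t' ht' =>
    ⟨sInf_times_le (hTC t' ht'), le_sSup_times hCfin (hTC t' ht')⟩
  set b₀ := sInf T with hb₀
  have hb₀T : b₀ ∈ T := Nat.sInf_mem hTne
  have hb₀lt : b₀ < α + Δ₁ := by
    by_contra h
    push_neg at h
    have hcompeq : comp Δ₂ E (s(x, y), b₀) = C := comp_eq (hTC b₀ hb₀T)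
    obtain ⟨th, h₁', h₂', h₃', h₄'⟩ := step_down h1 h12 hE h5 hxy hb₀T.1
      (by rw [hcompeq]; omega)
    have : th ∈ T := ⟨h₁', hb₀T.2.trans h₂'⟩
    exact absurd (Nat.sInf_le this) (by omega)
  by_cases hwin : ∃ t' ∈ T, τ ≤ t' ∧ t' ≤ τ + Δ₁ - 1
  · obtain ⟨t', ht'T, hw1, hw2⟩ := hwin
    exact ⟨t', Set.mem_Icc.mpr ⟨hw1, hw2⟩, hTC t' ht'T⟩
  · push_neg at hwin
    have hb₀τ : b₀ < τ := by
      rcases lt_or_ge b₀ τ with h | h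
      · exact h
      · exfalso
        have h1' := hwin b₀ hb₀T h
        have := (hbound b₀ hb₀T).1
        omega
    have hτnd : τ + Δ₁ ≤ β + 1 := by
      rcases le_total α (β + 1 - Δ₁) with h | h
      · rw [max_eq_right h] at hτ2; omega
      · rw [max_eq_left h] at hτ2
        exfalso
        have := (hbound b₀ hb₀T).1
        omega
    set T' := {t' ∈ T | t' < τ} with hT'
    have hT'ne : T'.Nonempty := ⟨b₀, hb₀T, hb₀τ⟩
    have hT'fin : T'.Finite := hTfin.subset (Set.sep_subset _ _)
    set am := sSup T' with ham
    have hamT' : am ∈ T' := Nat.sSup_mem hT'ne hT'fin.bddAbove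
    have hamlt : am < τ := hamT'.2
    have hcompeq : comp Δ₂ E (s(x, y), am) = C := comp_eq (hTC am hamT'.1)
    obtain ⟨th, h₁', h₂', h₃', h₄'⟩ := step_up h1 h12 hE h5 hxy hamT'.1.1
      (by rw [hcompeq]; omega)
    have hthT : th ∈ T := ⟨h₁', hamT'.1.2.trans h₂'⟩
    have hthτ : τ ≤ th := by
      by_contra h
      push_neg at h
      exact absurd (le_csSup hT'fin.bddAbove (⟨hthT, h⟩ : th ∈ T')) (by omega)
    exact ⟨th, Set.mem_Icc.mpr ⟨hthτ, by omega⟩, hTC th hthT⟩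

end FiveVertexAux
namespace FiveVertexAux

lemma close_pair {Δ₁ Δ₂ : ℕ} {E : Set TimeEdge} (h1 : 1 ≤ Δ₁) (h12 : Δ₁ < Δ₂)
    (hE : E.Finite) {a b : TimeEdge} (haE : a ∈ E) (hbE : b ∈ E) {s s' : ℕ}
    (hs : s ∈ lifetime (comp Δ₂ E a)) (hs' : s' ∈ lifetime (comp Δ₂ E b))
    (hc₁ : s < s' + Δ₂) (hc₂ : s' < s + Δ₂) :
    ∃ teC ∈ comp Δ₂ E a, ∃ teC' ∈ comp Δ₂ E b,
      teC.2 < teC'.2 + Δ₂ ∧ teC'.2 < teC.2 + Δ₂ := by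
  set Ca := comp Δ₂ E a with hCa
  set Cb := comp Δ₂ E b with hCb
  have hCafin : Ca.Finite := hE.subset comp_subset
  have hCbfin : Cb.Finite := hE.subset comp_subset
  have haCa : a ∈ Ca := mem_comp_self haE
  have hbCb : b ∈ Cb := mem_comp_self hbE
  obtain ⟨eαa, heαaC, heαa2⟩ := exists_at (Nat.sInf_mem ⟨a.2, mem_times haCa⟩)
  obtain ⟨eβa, heβaC, heβa2⟩ :=
    exists_at (Nat.sSup_mem ⟨a.2, mem_times haCa⟩ (times_finite hCafin).bddAbove)
  obtain ⟨eαb, heαbC, heαb2⟩ := exists_at (Nat.sInf_mem ⟨b.2, mem_times hbCb⟩)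
  obtain ⟨eβb, heβbC, heβb2⟩ :=
    exists_at (Nat.sSup_mem ⟨b.2, mem_times hbCb⟩ (times_finite hCbfin).bddAbove)
  obtain ⟨hsa, hsb⟩ := Set.mem_Icc.mp hs
  obtain ⟨hsa', hsb'⟩ := Set.mem_Icc.mp hs'
  rcases le_total (sSup (times Ca)) (sInf (times Cb)) with hab | hab
  · exact ⟨eβa, heβaC, eαb, heαbC, by omega, by omega⟩
  · rcases le_total (sSup (times Cb)) (sInf (times Ca)) with hba | hba
    · exact ⟨eαa, heαaC, eβb, heβbC, by omega, by omega⟩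
    · rcases le_total (sInf (times Ca)) (sInf (times Cb)) with haαb | haαb
      · -- sInf Ca ≤ sInf Cb ≤ sSup Ca
        by_cases hgt : sInf (times Cb) < sSup (times Ca)
        · obtain ⟨y, y', hrel, hray, hQy, hQy'⟩ := bridge (fun te => te.2 ≤ sInf (times Cb))
            ((reach_symm heαaC.2).trans heβaC.2) (by show eαa.2 ≤ _; omega)
            (by show ¬ eβa.2 ≤ _; omega)
          have hQy2 : y.2 ≤ sInf (times Cb) := hQy
          have hQy2' : ¬ y'.2 ≤ sInf (times Cb) := hQy'
          have hy'Ca : y' ∈ Ca := ⟨hrel.2.1, heαaC.2.trans (hray.tail hrel)⟩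
          obtain ⟨_, hdd⟩ := not_teindep_iff.mp hrel.2.2
          have hd1 := (lt_of_dist hdd).1
          have hd2 := (lt_of_dist hdd).2
          exact ⟨y', hy'Ca, eαb, heαbC, by omega, by omega⟩
        · exact ⟨eβa, heβaC, eαb, heαbC, by omega, by omega⟩
      · -- sInf Cb ≤ sInf Ca ≤ sSup Cb
        by_cases hgt : sInf (times Ca) < sSup (times Cb)
        · obtain ⟨y, y', hrel, hray, hQy, hQy'⟩ := bridge (fun te => te.2 ≤ sInf (times Ca))
            ((reach_symm heαbC.2).trans heβbC.2) (by show eαb.2 ≤ _; omega)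
            (by show ¬ eβb.2 ≤ _; omega)
          have hQy2 : y.2 ≤ sInf (times Ca) := hQy
          have hQy2' : ¬ y'.2 ≤ sInf (times Ca) := hQy'
          have hy'Cb : y' ∈ Cb := ⟨hrel.2.1, heαbC.2.trans (hray.tail hrel)⟩
          obtain ⟨_, hdd⟩ := not_teindep_iff.mp hrel.2.2
          have hd1 := (lt_of_dist hdd).1
          have hd2 := (lt_of_dist hdd).2
          exact ⟨eαa, heαaC, y', hy'Cb, by omega, by omega⟩
        · exact ⟨eαa, heαaC, eβb, heβbC, by omega, by omega⟩

end FiveVertexAux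
namespace FiveVertexAux

lemma u_carrier {Δ₁ Δ₂ : ℕ} {E : Set TimeEdge} (h1 : 1 ≤ Δ₁) (h12 : Δ₁ < Δ₂)
    (hE : E.Finite)
    (h5 : ∀ A : Set ℕ, A.Finite → A.ncard ≤ 5 → IsClusterTemporalGraph Δ₁ Δ₂ (induced E A))
    {a : TimeEdge} {u : ℕ} (hu : u ∈ verts (comp Δ₂ E a)) {teC : TimeEdge}
    (hteC : teC ∈ comp Δ₂ E a) :
    ∃ c ∈ comp Δ₂ E a, u ∈ c.1 ∧ (∀ v ∈ c.1, v = u ∨ v ∈ teC.1) ∧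
      ¬ TEIndep Δ₂ c teC ∧ ((∃ w ∈ c.1, w ≠ u) ∨ c = teC) := by
  by_cases huC : u ∈ teC.1
  · exact ⟨teC, hteC, huC, fun v hv => Or.inr hv, not_teindep_refl (by omega) teC,
      Or.inr rfl⟩
  · obtain ⟨teu, hteuC, hteuu⟩ := hu
    obtain ⟨z₁, z₂, hz⟩ := sym2_exists teC.1
    have hz₁ : z₁ ∈ teC.1 := by rw [hz]; exact Sym2.mem_mk_left ..
    have huz : u ≠ z₁ := fun h => huC (h ▸ hz₁)
    obtain ⟨tc, hc₁, hc₂, hc₃, hc₄⟩ := carrier h1 h12 hE h5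
      ((reach_symm hteuC.2).trans hteC.2) hteuC.1 u z₁ hteuu hz₁ huz
    refine ⟨(s(u, z₁), tc), ⟨hc₁, hteuC.2.trans hc₂⟩, Sym2.mem_mk_left .., ?_, ?_, ?_⟩
    · intro v hv
      rcases Sym2.mem_iff.mp hv with rfl | rfl
      · exact Or.inl rfl
      · exact Or.inr hz₁
    · rw [not_teindep_iff]
      exact ⟨⟨z₁, Sym2.mem_mk_right .., hz₁⟩, dist_lt (by omega) (by omega)⟩
    · exact Or.inl ⟨z₁, Sym2.mem_mk_right .., fun h => huz h.symm⟩

lemma comp_indep {Δ₁ Δ₂ : ℕ} {E : Set TimeEdge} (h1 : 1 ≤ Δ₁) (h12 : Δ₁ < Δ₂)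
    (hE : E.Finite)
    (h5 : ∀ A : Set ℕ, A.Finite → A.ncard ≤ 5 → IsClusterTemporalGraph Δ₁ Δ₂ (induced E A))
    {a b : TimeEdge} (haE : a ∈ E) (hbE : b ∈ E) (hnr : ¬ Reach Δ₂ E a b) :
    Indep Δ₂ (comp Δ₂ E a) (comp Δ₂ E b) := by
  set Ca := comp Δ₂ E a with hCa
  set Cb := comp Δ₂ E b with hCb
  by_cases hdisj : Disjoint (verts Ca) (verts Cb)
  · exact Or.inl hdisj
  · right
    intro s hs s' hs'
    by_contra hfar
    push_neg at hfar
    obtain ⟨hc₁, hc₂⟩ := lt_of_dist hfar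
    obtain ⟨u, huA, huB⟩ := Set.not_disjoint_iff.mp hdisj
    obtain ⟨teC, hteC, teC', hteC', hcl₁, hcl₂⟩ :=
      close_pair h1 h12 hE haE hbE hs hs' hc₁ hc₂
    obtain ⟨c, hcC, hcu, hcA, hcNd, hcD⟩ := u_carrier h1 h12 hE h5 huA hteC
    obtain ⟨c', hc'C, hc'u, hc'A, hc'Nd, hc'D⟩ := u_carrier h1 h12 hE h5 huB hteC'
    -- cross reach gives the final contradiction
    have hcross : ¬ Reach Δ₂ E c c' := by
      intro h
      exact hnr ((hcC.2.trans h).trans (reach_symm hc'C.2))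
    -- 5-vertex configuration
    obtain ⟨z₁, z₂, hz⟩ := sym2_exists teC.1
    obtain ⟨z₁', z₂', hz'⟩ := sym2_exists teC'.1
    set A : Set ℕ := {u, z₁, z₂, z₁', z₂'} with hA
    have hteCA : ∀ v ∈ teC.1, v ∈ A := by
      intro v hv; rw [hz] at hv
      rcases Sym2.mem_iff.mp hv with rfl | rfl <;> simp [hA]
    have hteC'A : ∀ v ∈ teC'.1, v ∈ A := by
      intro v hv; rw [hz'] at hv
      rcases Sym2.mem_iff.mp hv with rfl | rfl <;> simp [hA]
    have hcA' : ∀ v ∈ c.1, v ∈ A := by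
      intro v hv
      rcases hcA v hv with rfl | h
      · simp [hA]
      · exact hteCA v h
    have hc'A' : ∀ v ∈ c'.1, v ∈ A := by
      intro v hv
      rcases hc'A v hv with rfl | h
      · simp [hA]
      · exact hteC'A v h
    obtain ⟨P, hPU, hPD, hPC, hPI⟩ := h5 A (finite5 u z₁ z₂ z₁' z₂')
      (ncard5 u z₁ z₂ z₁' z₂')
    obtain ⟨L, hLP, hteCL⟩ := find_part hPU (mem_induced hteC.1 hteCA)
    have hcL : c ∈ L := same_part hE hPU hPI hLP hteCL (mem_induced hcC.1 hcA')
      (fun h => hcNd (teindep_symm h))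
    obtain ⟨L', hL'P, hteC'L'⟩ := find_part hPU (mem_induced hteC'.1 hteC'A)
    have hc'L' : c' ∈ L' := same_part hE hPU hPI hL'P hteC'L' (mem_induced hc'C.1 hc'A')
      (fun h => hc'Nd (teindep_symm h))
    have hLfin : L.Finite := hE.subset ((part_sub hPU hLP).trans induced_subset)
    have hL'fin : L'.Finite := hE.subset ((part_sub hPU hL'P).trans induced_subset)
    have hLL : L = L' := by
      by_contra hne
      rcases hPI hLP hL'P hne with hd | hf
      · exact Set.disjoint_left.mp hd (mem_verts hcL hcu) (mem_verts hc'L' hc'u)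
      · have := hf teC.2 (mem_lifetime' hLfin hteCL) teC'.2 (mem_lifetime' hL'fin hteC'L')
        omega
    subst hLL
    have hLE : L ⊆ E := (part_sub hPU hLP).trans induced_subset
    have hLcl : IsTemporalClique Δ₁ L := hPC L hLP
    -- produce a reach between c and c'
    apply hcross
    have hkconn : ∀ w, w ∈ verts L → w ≠ u → Reach Δ₂ E c c' :=
      fun w hw hwu => kconn h1 h12 hLfin hLE hLcl (mem_verts hcL hcu) hw
        (fun h => hwu h.symm) hcL hc'L'
    rcases hcD with ⟨w, hwc, hwu⟩ | hceq
    · exact hkconn w (mem_verts hcL hwc) hwu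
    · rcases hc'D with ⟨w, hwc', hwu⟩ | hc'eq
      · exact hkconn w (mem_verts hc'L' hwc') hwu
      · subst hceq; subst hc'eq
        refine Relation.ReflTransGen.single ⟨hteC.1, hteC'.1, ?_⟩
        rw [not_teindep_iff]
        exact ⟨⟨u, hcu, hc'u⟩, dist_lt (by omega) (by omega)⟩

end FiveVertexAux
theorem five_vertex_condition_suffices (Δ₁ Δ₂ : ℕ) (h1 : 1 ≤ Δ₁) (h2 : Δ₁ < Δ₂)
    (E : Set TimeEdge) (hE : E.Finite)
    (h5 : ∀ A : Set ℕ, A.Finite → A.ncard ≤ 5 →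
      IsClusterTemporalGraph Δ₁ Δ₂ (induced E A)) :
    IsClusterTemporalGraph Δ₁ Δ₂ E := by
  classical
  open FiveVertexAux in
  refine ⟨{S | ∃ te ∈ E, S = FiveVertexAux.comp Δ₂ E te}, ?_, ?_, ?_, ?_⟩
  · apply Set.eq_of_subset_of_subset
    · intro te hte
      obtain ⟨S, ⟨te₀, h₀, rfl⟩, hteS⟩ := hte
      exact hteS.1
    · intro te hte
      exact ⟨FiveVertexAux.comp Δ₂ E te, ⟨te, hte, rfl⟩, FiveVertexAux.mem_comp_self hte⟩
  · rintro S ⟨te, hteE, rfl⟩ S' ⟨te', hte'E, rfl⟩ hne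
    rw [Function.onFun, Set.disjoint_left]
    intro w hw hw'
    exact hne (by rw [← FiveVertexAux.comp_eq hw, FiveVertexAux.comp_eq hw'])
  · rintro K ⟨te, hteE, rfl⟩
    exact FiveVertexAux.comp_clique h1 h2 hE h5 hteE
  · rintro S ⟨te, hteE, rfl⟩ S' ⟨te', hte'E, rfl⟩ hne
    refine FiveVertexAux.comp_indep h1 h2 hE h5 hteE hte'E ?_
    intro hr
    exact hne (FiveVertexAux.comp_eq ⟨hte'E, hr⟩).symm
end

section
/- If M is a Δ-temporal matching (with Δ = 2) of a temporal graph P, then the set M' = {(e, 4t−3) : (e,t) ∈ M} is a set of pairwise 5-independent time-edges; equivalently, the temporal graph with time-edge set M' is a (1,5)-cluster temporal graph. -/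
lemma verts_singleton (a : TimeEdge) : verts {a} = {v | v ∈ a.1} := by
  ext v; simp [verts]

lemma times_singleton (a : TimeEdge) : times {a} = {a.2} := by
  simp [times]

lemma lifetime_singleton (a : TimeEdge) : lifetime {a} = {a.2} := by
  simp [lifetime, times_singleton]

theorem stretched_matching_is_cluster (M : Set TimeEdge) (hM : M.Finite)
    (hpos : ∀ te ∈ M, 1 ≤ te.2)
    (hmatch : ∀ te₁ ∈ M, ∀ te₂ ∈ M, te₁ ≠ te₂ → TEIndep 2 te₁ te₂)
    (M' : Set TimeEdge)
    (hM' : M' = (fun te : TimeEdge => (te.1, 4 * te.2 - 3)) '' M) :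
    (∀ te₁ ∈ M', ∀ te₂ ∈ M', te₁ ≠ te₂ → TEIndep 5 te₁ te₂) ∧
      IsClusterTemporalGraph 1 5 M' := by
  have key : ∀ te₁ ∈ M', ∀ te₂ ∈ M', te₁ ≠ te₂ → TEIndep 5 te₁ te₂ := by
    intro te₁ h1 te₂ h2 hne
    rw [hM'] at h1 h2
    obtain ⟨u, hu, rfl⟩ := h1
    obtain ⟨v, hv, rfl⟩ := h2
    have huv : u ≠ v := by rintro rfl; exact hne rfl
    have hp1 := hpos u hu
    have hp2 := hpos v hv
    rcases hmatch u hu v hv huv with h | h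
    · exact Or.inl h
    · right; simp only; omega
  refine ⟨key, ?_⟩
  refine ⟨(fun te => {te}) '' M', ?_, ?_, ?_, ?_⟩
  · ext te; simp
  · rintro A ⟨a, ha, rfl⟩ B ⟨b, hb, rfl⟩ hAB
    simp only [id]
    exact Set.disjoint_singleton.mpr fun h => hAB (by rw [h])
  · rintro K ⟨a, ha, rfl⟩
    intro x hx y hy hxy
    rw [verts_singleton] at hx hy
    rw [times_singleton]
    simp only [csInf_singleton, csSup_singleton]
    intro τ hτ
    have hτa : τ = a.2 := by
      simp only [Set.mem_Icc] at hτ; omega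
    refine ⟨τ, by simp [Set.mem_Icc], ?_⟩
    have : a.1 = s(x, y) := ((Sym2.mem_and_mem_iff hxy).mp ⟨hx, hy⟩)
    subst hτa
    rw [← this]
    simp
  · rintro A ⟨a, ha, rfl⟩ B ⟨b, hb, rfl⟩ hAB
    have hab : a ≠ b := fun h => hAB (by rw [h])
    rcases key a ha b hb hab with h | h
    · left
      rw [verts_singleton, verts_singleton]
      exact Set.disjoint_left.mpr fun v hv => h v hv
    · right
      rw [lifetime_singleton, lifetime_singleton]
      rintro s rfl t rfl
      exact h
end

section
/- Let G be a static graph and k ∈ ℕ. Define the temporal graph 𝒢 = (G,𝒯) with 𝒯(e) = {1} for every edge e. Then G can be transformed into a cluster graph (disjoint union of cliques) by at most k edge modifications if and only if 𝒢 can be transformed into a (1,1)-cluster temporal graph by at most k time-edge modifications. -/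
/-- A static cluster graph: a disjoint union of cliques, equivalently no induced P₃. -/
def IsClusterGraph (H : SimpleGraph ℕ) : Prop :=
  ∀ x y z : ℕ, H.Adj x y → H.Adj y z → x ≠ z → H.Adj x z


section Aux

/-- Same-cluster relation: equal or adjacent. -/
def ClRel (H : SimpleGraph ℕ) (x y : ℕ) : Prop := x = y ∨ H.Adj x y

lemma clrel_refl (H : SimpleGraph ℕ) (x : ℕ) : ClRel H x x := Or.inl rfl

lemma clrel_symm {H : SimpleGraph ℕ} {x y : ℕ} (h : ClRel H x y) : ClRel H y x := by
  rcases h with rfl | h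
  · exact Or.inl rfl
  · exact Or.inr h.symm

lemma clrel_trans {H : SimpleGraph ℕ} (hH : IsClusterGraph H) {x y z : ℕ}
    (hxy : ClRel H x y) (hyz : ClRel H y z) : ClRel H x z := by
  rcases hxy with rfl | hxy
  · exact hyz
  rcases hyz with rfl | hyz
  · exact Or.inr hxy
  by_cases hxz : x = z
  · exact Or.inl hxz
  · exact Or.inr (hH x y z hxy hyz hxz)

lemma clrel_of_mem_edge {H : SimpleGraph ℕ} {e : Sym2 ℕ} (he : e ∈ H.edgeSet)
    {a b : ℕ} (ha : a ∈ e) (hb : b ∈ e) : ClRel H a b := by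
  induction e using Sym2.inductionOn with
  | hf u v =>
    rw [Sym2.mem_iff] at ha hb
    rw [SimpleGraph.mem_edgeSet] at he
    rcases ha with rfl | rfl <;> rcases hb with rfl | rfl
    · exact Or.inl rfl
    · exact Or.inr he
    · exact Or.inr he.symm
    · exact Or.inl rfl

/-- The temporal cluster generated by an edge. -/
def cl (H : SimpleGraph ℕ) (e : Sym2 ℕ) : Set TimeEdge :=
  {te | ∃ f ∈ H.edgeSet, te = (f, 1) ∧ ∃ a ∈ e, ∃ b ∈ f, ClRel H a b}

/-- Vertex related to some endpoint of `e`. -/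
def relE (H : SimpleGraph ℕ) (e : Sym2 ℕ) (v : ℕ) : Prop := ∃ a ∈ e, ClRel H a v

lemma self_mem_cl {H : SimpleGraph ℕ} {e : Sym2 ℕ} (he : e ∈ H.edgeSet) :
    (e, 1) ∈ cl H e :=
  ⟨e, he, rfl, e.out.1, Sym2.out_fst_mem e, e.out.1, Sym2.out_fst_mem e, Or.inl rfl⟩

lemma relE_of_mem_cl {H : SimpleGraph ℕ} (hH : IsClusterGraph H) {e : Sym2 ℕ}
    {te : TimeEdge} (hte : te ∈ cl H e) {v : ℕ} (hv : v ∈ te.1) : relE H e v := by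
  obtain ⟨f, hf, rfl, a, ha, b, hb, hab⟩ := hte
  exact ⟨a, ha, clrel_trans hH hab (clrel_of_mem_edge hf hb hv)⟩

lemma clrel_of_relE {H : SimpleGraph ℕ} (hH : IsClusterGraph H) {e : Sym2 ℕ}
    (he : e ∈ H.edgeSet) {x y : ℕ} (hx : relE H e x) (hy : relE H e y) : ClRel H x y := by
  obtain ⟨a, ha, hax⟩ := hx
  obtain ⟨b, hb, hby⟩ := hy
  exact clrel_trans hH (clrel_symm hax) (clrel_trans hH (clrel_of_mem_edge he ha hb) hby)

lemma cl_subset {H : SimpleGraph ℕ} (hH : IsClusterGraph H) {e e' : Sym2 ℕ}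
    (he : e ∈ H.edgeSet) {v : ℕ} (hv : relE H e v) (hv' : relE H e' v) :
    cl H e ⊆ cl H e' := by
  rintro te ⟨f, hf, rfl, a, ha, b, hb, hab⟩
  obtain ⟨a', ha', hav'⟩ := hv'
  obtain ⟨c, hc, hcv⟩ := hv
  refine ⟨f, hf, rfl, a', ha', b, hb, ?_⟩
  exact clrel_trans hH hav' (clrel_trans hH (clrel_symm hcv)
    (clrel_trans hH (clrel_of_mem_edge he hc ha) hab))

lemma cl_eq {H : SimpleGraph ℕ} (hH : IsClusterGraph H) {e e' : Sym2 ℕ}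
    (he : e ∈ H.edgeSet) (he' : e' ∈ H.edgeSet) {v : ℕ}
    (hv : relE H e v) (hv' : relE H e' v) : cl H e = cl H e' :=
  Set.Subset.antisymm (cl_subset hH he hv hv') (cl_subset hH he' hv' hv)

lemma relE_of_mem_verts {H : SimpleGraph ℕ} (hH : IsClusterGraph H) {e : Sym2 ℕ}
    {v : ℕ} (hv : v ∈ verts (cl H e)) : relE H e v := by
  obtain ⟨te, hte, hvte⟩ := hv
  exact relE_of_mem_cl hH hte hvte

lemma times_cl {H : SimpleGraph ℕ} {e : Sym2 ℕ} (he : e ∈ H.edgeSet) :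
    times (cl H e) = {1} := by
  ext t
  constructor
  · rintro ⟨te, ⟨f, hf, rfl, _⟩, rfl⟩; rfl
  · rintro rfl; exact ⟨(e, 1), self_mem_cl he, rfl⟩

end Aux

theorem cluster_editing_reduction (G : SimpleGraph ℕ) (hG : G.edgeSet.Finite) (k : ℕ)
    (EG : Set TimeEdge) (hEG : EG = (fun e => (e, 1)) '' G.edgeSet) :
    (∃ H : SimpleGraph ℕ, IsClusterGraph H ∧
        (symmDiff G.edgeSet H.edgeSet).Finite ∧
        (symmDiff G.edgeSet H.edgeSet).ncard ≤ k) ↔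
      (∃ E' : Set TimeEdge, IsClusterTemporalGraph 1 1 E' ∧
        (symmDiff EG E').Finite ∧ (symmDiff EG E').ncard ≤ k) :=  by
  subst hEG
  have hinj : Function.Injective (fun e : Sym2 ℕ => ((e, 1) : TimeEdge)) := by
    intro a b h; exact (Prod.mk.injEq _ _ _ _).mp h |>.1
  constructor
  · rintro ⟨H, hH, hfin, hcard⟩
    refine ⟨(fun e => (e, 1)) '' H.edgeSet, ?_, ?_, ?_⟩
    · -- cluster temporal graph
      refine ⟨{K | ∃ e ∈ H.edgeSet, K = cl H e}, ?_, ?_, ?_, ?_⟩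
      · ext te
        constructor
        · rintro ⟨K, ⟨e, he, rfl⟩, f, hf, rfl, _⟩
          exact ⟨f, hf, rfl⟩
        · rintro ⟨f, hf, rfl⟩
          exact ⟨cl H f, ⟨f, hf, rfl⟩, self_mem_cl hf⟩
      · rintro K ⟨e, he, rfl⟩ K' ⟨e', he', rfl⟩ hne
        refine Set.disjoint_left.mpr fun te hte hte' => ?_
        have hv : te.1.out.1 ∈ te.1 := Sym2.out_fst_mem te.1
        exact hne (cl_eq hH he he' (relE_of_mem_cl hH hte hv) (relE_of_mem_cl hH hte' hv))
      · rintro K ⟨e, he, rfl⟩ x hx y hy hxy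
        have hrx := relE_of_mem_verts hH hx
        have hry := relE_of_mem_verts hH hy
        have hadj : H.Adj x y := by
          rcases clrel_of_relE hH he hrx hry with rfl | h
          · exact absurd rfl hxy
          · exact h
        have hmem : (s(x, y), 1) ∈ cl H e := by
          obtain ⟨a, ha, hax⟩ := hrx
          exact ⟨s(x, y), hadj, rfl, a, ha, x, Sym2.mem_mk_left x y, hax⟩
        unfold DenseIn
        rw [times_cl he, csInf_singleton, csSup_singleton]
        intro τ hτ
        simp only [Set.mem_Icc] at hτ
        have : τ = 1 := le_antisymm (by omega) hτ.1
        subst this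
        exact ⟨1, by simp, hmem⟩
      · rintro K ⟨e, he, rfl⟩ K' ⟨e', he', rfl⟩ hne
        left
        by_contra hdis
        obtain ⟨v, hv, hv'⟩ := Set.not_disjoint_iff.mp hdis
        exact hne (cl_eq hH he he' (relE_of_mem_verts hH hv) (relE_of_mem_verts hH hv'))
    · rw [← Set.image_symmDiff hinj]
      exact hfin.image _
    · rw [← Set.image_symmDiff hinj, Set.ncard_image_of_injective _ hinj]
      exact hcard
  · rintro ⟨E', ⟨P, hUP, hPdisj, hPclique, hPindep⟩, hfin, hcard⟩
    have hEGfin : ((fun e => ((e, 1) : TimeEdge)) '' G.edgeSet).Finite := hG.image _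
    have hE'fin : E'.Finite := by
      have : E' ⊆ ((fun e => ((e, 1) : TimeEdge)) '' G.edgeSet) ∪
          symmDiff ((fun e => ((e, 1) : TimeEdge)) '' G.edgeSet) E' := by
        intro te hte
        by_cases h : te ∈ (fun e => ((e, 1) : TimeEdge)) '' G.edgeSet
        · exact Or.inl h
        · exact Or.inr (Or.inr ⟨hte, h⟩)
      exact (hEGfin.union hfin).subset this
    set S : Set (Sym2 ℕ) := {e | (e, 1) ∈ E'} with hS
    set H : SimpleGraph ℕ := SimpleGraph.fromEdgeSet S with hHdef
    -- key: H is a cluster graph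
    have hone_mem : ∀ {K : Set TimeEdge}, K ∈ P → ∀ {te : TimeEdge}, te ∈ K →
        te.2 = 1 → 1 ∈ lifetime K := by
      intro K hK te hte h1
      have htK : (1 : ℕ) ∈ times K := ⟨te, hte, h1⟩
      have hbdd : BddAbove (times K) := by
        refine Set.Finite.bddAbove ?_
        refine (hE'fin.subset ?_).image _
        intro x hx
        exact hUP ▸ ⟨K, hK, hx⟩
      exact ⟨Nat.sInf_le htK, le_csSup hbdd htK⟩
    have key : ∀ x y : ℕ, H.Adj x y → s(x, y) ∈ S := by
      intro x y hxy
      rw [hHdef, SimpleGraph.fromEdgeSet_adj] at hxy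
      exact hxy.1
    have hclH : IsClusterGraph H := by
      intro x y z hxy hyz hxz
      have h1 : (s(x, y), 1) ∈ E' := key x y hxy
      have h2 : (s(y, z), 1) ∈ E' := key y z hyz
      rw [← hUP] at h1 h2
      obtain ⟨K₁, hK₁, hm1⟩ := h1
      obtain ⟨K₂, hK₂, hm2⟩ := h2
      have hKeq : K₁ = K₂ := by
        by_contra hne
        rcases hPindep hK₁ hK₂ hne with hdis | hfar
        · exact Set.disjoint_left.mp hdis
            ⟨(s(x, y), 1), hm1, Sym2.mem_mk_right x y⟩
            ⟨(s(y, z), 1), hm2, Sym2.mem_mk_left y z⟩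
        · have := hfar 1 (hone_mem hK₁ hm1 rfl) 1 (hone_mem hK₂ hm2 rfl)
          simp at this
      subst hKeq
      have hclq := hPclique K₁ hK₁
      have hx : x ∈ verts K₁ := ⟨(s(x, y), 1), hm1, Sym2.mem_mk_left x y⟩
      have hz : z ∈ verts K₁ := ⟨(s(y, z), 1), hm2, Sym2.mem_mk_right y z⟩
      have hdense := hclq x hx z hz hxz
      have htK : (1 : ℕ) ∈ times K₁ := ⟨(s(x, y), 1), hm1, rfl⟩
      have hbdd : BddAbove (times K₁) := by
        refine Set.Finite.bddAbove ?_
        refine (hE'fin.subset ?_).image _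
        intro w hw
        exact hUP ▸ ⟨K₁, hK₁, hw⟩
      have ha : sInf (times K₁) ≤ 1 := Nat.sInf_le htK
      have hb : 1 ≤ sSup (times K₁) := le_csSup hbdd htK
      obtain ⟨t, ht, hmem⟩ := hdense 1 ⟨ha, le_max_of_le_right (by omega)⟩
      simp only [Set.mem_Icc] at ht
      have : t = 1 := by omega
      subst this
      rw [hHdef, SimpleGraph.fromEdgeSet_adj]
      refine ⟨?_, hxz⟩
      show (s(x, z), 1) ∈ E'
      rw [← hUP]
      exact ⟨K₁, hK₁, hmem⟩
    refine ⟨H, hclH, ?_⟩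
    have himg : (fun e : Sym2 ℕ => ((e, 1) : TimeEdge)) '' symmDiff G.edgeSet H.edgeSet ⊆
        symmDiff ((fun e => ((e, 1) : TimeEdge)) '' G.edgeSet) E' := by
      rintro te ⟨e, he, rfl⟩
      rcases he with ⟨heG, heH⟩ | ⟨heH, heG⟩
      · left
        refine ⟨⟨e, heG, rfl⟩, ?_⟩
        intro hmem
        apply heH
        rw [hHdef, SimpleGraph.edgeSet_fromEdgeSet]
        exact ⟨hmem, (SimpleGraph.not_isDiag_of_mem_edgeSet G heG)⟩
      · right
        have heS : e ∈ S := by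
          rw [hHdef, SimpleGraph.edgeSet_fromEdgeSet] at heH
          exact heH.1
        refine ⟨heS, ?_⟩
        intro hmem
        obtain ⟨f, hf, hfe⟩ := hmem
        have : f = e := hinj hfe
        subst this
        exact heG hf
    have hfin' : (symmDiff G.edgeSet H.edgeSet).Finite := by
      have : ((fun e : Sym2 ℕ => ((e, 1) : TimeEdge)) ''
          symmDiff G.edgeSet H.edgeSet).Finite := hfin.subset himg
      exact Set.Finite.of_finite_image this (hinj.injOn)
    refine ⟨hfin', ?_⟩
    calc (symmDiff G.edgeSet H.edgeSet).ncard
        = ((fun e : Sym2 ℕ => ((e, 1) : TimeEdge)) ''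
            symmDiff G.edgeSet H.edgeSet).ncard :=
          (Set.ncard_image_of_injective _ hinj).symm
      _ ≤ (symmDiff ((fun e => ((e, 1) : TimeEdge)) '' G.edgeSet) E').ncard :=
          Set.ncard_le_ncard himg hfin
      _ ≤ k := hcard
end

section
/- Let Δ₁ ≥ 1, and let S₁ and S₂ be sets of appearances (time-edges) of edges e₁ and e₂ respectively, such that both e₁ and e₂ are Δ₁-dense within a common interval [a,b] of length at least 1, and S₁, S₂ are exactly the appearances of e₁, e₂ in [a,b]. If e₁ and e₂ share a vertex and Δ₂ > Δ₁, then S₁ ∪ S₂ is Δ₂-indivisible. -/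
theorem dense_union_indivisible (Δ₁ Δ₂ : ℕ) (h1 : 1 ≤ Δ₁) (h2 : Δ₁ < Δ₂)
    (E : Set TimeEdge) (e₁ e₂ : Sym2 ℕ) (a b : ℕ) (hab : a ≤ b)
    (hshare : ∃ v, v ∈ e₁ ∧ v ∈ e₂)
    (hd₁ : DenseIn E Δ₁ e₁ a b) (hd₂ : DenseIn E Δ₁ e₂ a b)
    (S₁ S₂ : Set TimeEdge)
    (hS₁ : S₁ = {te ∈ E | te.1 = e₁ ∧ te.2 ∈ Set.Icc a b})
    (hS₂ : S₂ = {te ∈ E | te.1 = e₂ ∧ te.2 ∈ Set.Icc a b}) :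
    Indivisible Δ₂ (S₁ ∪ S₂) := by
  obtain ⟨v, hv1, hv2⟩ := hshare
  rintro ⟨P, hPnt, hPne, hPun, hPdisj, hPind⟩
  have hsub : ∀ A ∈ P, A ⊆ S₁ ∪ S₂ := fun A hA => hPun ▸ Set.subset_sUnion_of_mem hA
  have htime : ∀ te ∈ S₁ ∪ S₂, te.2 ∈ Set.Icc a b := by
    rintro te (h | h)
    · rw [hS₁] at h; exact h.2.2
    · rw [hS₂] at h; exact h.2.2
  have hvv : ∀ te ∈ S₁ ∪ S₂, v ∈ te.1 := by
    rintro te (h | h)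
    · rw [hS₁] at h; rw [h.2.1]; exact hv1
    · rw [hS₂] at h; rw [h.2.1]; exact hv2
  have hpart : ∀ A ∈ P, (times A).Nonempty ∧ times A ⊆ Set.Icc a b ∧ BddAbove (times A) := by
    intro A hA
    obtain ⟨te, hte⟩ := hPne A hA
    refine ⟨⟨te.2, ⟨te, hte, rfl⟩⟩, ?_, ⟨b, ?_⟩⟩
    · rintro t ⟨te', hte', rfl⟩; exact htime te' (hsub A hA hte')
    · rintro t ⟨te', hte', rfl⟩; exact (htime te' (hsub A hA hte')).2
  have hvertv : ∀ A ∈ P, v ∈ verts A := by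
    intro A hA
    obtain ⟨te, hte⟩ := hPne A hA
    exact ⟨te, hte, hvv te (hsub A hA hte)⟩
  have hsupmem : ∀ A ∈ P, sSup (times A) ∈ times A := fun A hA =>
    Nat.sSup_mem (hpart A hA).1 (hpart A hA).2.2
  have hinfmem : ∀ A ∈ P, sInf (times A) ∈ times A := fun A hA =>
    Nat.sInf_mem (hpart A hA).1
  have hmemlife : ∀ A ∈ P, ∀ t ∈ times A, t ∈ lifetime A := by
    intro A hA t ht
    exact ⟨Nat.sInf_le ht, le_csSup (hpart A hA).2.2 ht⟩
  have hIndc : ∀ A ∈ P, ∀ B ∈ P, A ≠ B →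
      ∀ s ∈ lifetime A, ∀ t ∈ lifetime B, Δ₂ ≤ max s t - min s t := by
    intro A hA B hB hAB
    rcases hPind hA hB hAB with h | h
    · exact (Set.disjoint_left.mp h (hvertv A hA) (hvertv B hB)).elim
    · exact h
  have key : ∀ A ∈ P, ∀ B ∈ P, A ≠ B → sSup (times A) ≤ sSup (times B) → False := by
    intro A hA B hB hAB hle
    set m := sSup (times A) with hm
    have hmA : m ∈ lifetime A := hmemlife A hA m (hsupmem A hA)
    have hmab : m ∈ Set.Icc a b := (hpart A hA).2.1 (hsupmem A hA)
    set t₀ := sInf (times B) with ht₀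
    have ht₀B : t₀ ∈ lifetime B := hmemlife B hB t₀ (hinfmem B hB)
    have ht₀ab : t₀ ∈ Set.Icc a b := (hpart B hB).2.1 (hinfmem B hB)
    rw [Set.mem_Icc] at hmab ht₀ab
    obtain ⟨ha1, ha2⟩ := hmab
    obtain ⟨hb1, hb2⟩ := ht₀ab
    -- m < t₀
    have hmt : m < t₀ := by
      by_contra hcon
      push_neg at hcon
      have hmB : m ∈ lifetime B := ⟨hcon, hle⟩
      have := hIndc A hA B hB hAB m hmA m hmB
      omega
    have hgap : m + Δ₂ ≤ t₀ := by
      have := hIndc A hA B hB hAB m hmA t₀ ht₀B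
      omega
    -- density gives an appearance of e₁ in the gap
    obtain ⟨t, htI, htE⟩ := hd₁ (m + 1)
      ⟨by omega, le_max_of_le_right (by omega)⟩
    have htb : m + 1 ≤ t ∧ t ≤ m + Δ₁ := by
      obtain ⟨h3, h4⟩ := htI
      omega
    have htS : (e₁, t) ∈ S₁ ∪ S₂ := by
      left; rw [hS₁]
      exact ⟨htE, rfl, by simp only [Set.mem_Icc]; omega⟩
    rw [← hPun] at htS
    obtain ⟨C, hC, htC⟩ := htS
    have htTimes : t ∈ times C := ⟨(e₁, t), htC, rfl⟩
    by_cases hCA : C = A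
    · subst hCA
      have := le_csSup (hpart C hC).2.2 htTimes
      omega
    · have := hIndc A hA C hC (fun h => hCA h.symm) m hmA t (hmemlife C hC t htTimes)
      omega
  obtain ⟨A, hA, B, hB, hAB⟩ := hPnt
  rcases le_total (sSup (times A)) (sSup (times B)) with h | h
  · exact key A hA B hB hAB h
  · exact key B hB A hA (Ne.symm hAB) h
end
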